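/- arXiv:2307.01623 — 10 statements merged into one kernel-verified Lean document; each statement's English description precedes it below -/
import Mathlib

section
/- Fix z ∈ (0,1), constants λ̄ ≥ λ_z > 0, and define the scale density s'(a) = exp(−2∫_z^a (−λ̄²p²(1−p))/(λ_z²p²(1−p)²) dp) for a ∈ (0, z]. Then s'(a) = C(z)·(1−a)^{−2(λ̄/λ_z)²} for a constant C(z) > 0, and with speed density m(p) = 2/(λ_z²p²(1−p)²s'(p)), the Feller integral ∫₀^z s'(a)·(∫_a^z m(p) dp) da diverges to +∞. -/
open MeasureTheory

theorem stmt4 (z lamz lbar : ℝ) (hz : z ∈ Set.Ioo (0:ℝ) 1)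
    (hlamz : 0 < lamz) (hle : lamz ≤ lbar)
    (s' m : ℝ → ℝ)
    (hs' : ∀ a ∈ Set.Ioc (0:ℝ) z,
      s' a = Real.exp (-2 * ∫ p in z..a,
        (-(lbar^2*p^2*(1-p)))/(lamz^2*p^2*(1-p)^2)))
    (hm : ∀ p ∈ Set.Ioc (0:ℝ) z, m p = 2/(lamz^2*p^2*(1-p)^2*s' p)) :
    (∃ C > 0, ∀ a ∈ Set.Ioc (0:ℝ) z,
        s' a = C * (1-a) ^ (-(2*(lbar/lamz)^2))) ∧
    ∫⁻ a in Set.Ioo (0:ℝ) z, ENNReal.ofReal (s' a * ∫ p in a..z, m p) = ⊤ := by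
  obtain ⟨hz0, hz1⟩ := hz
  have hlbar : 0 < lbar := lt_of_lt_of_le hlamz hle
  have h1z : (0:ℝ) < 1 - z := by linarith
  set k : ℝ := (lbar/lamz)^2 with hkdef
  have hk0 : 0 < k := by positivity
  set C : ℝ := (1-z) ^ (2*k) with hCdef
  have hC : 0 < C := Real.rpow_pos_of_pos h1z _
  -- Step 1: explicit formula for s'
  have key : ∀ a ∈ Set.Ioc (0:ℝ) z, s' a = C * (1-a) ^ (-(2*k)) := by
    intro a ha
    obtain ⟨ha0, haz⟩ := ha
    have h1a : (0:ℝ) < 1 - a := by linarith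
    rw [hs' a ⟨ha0, haz⟩]
    have hEq : Set.EqOn (fun p => (-(lbar^2*p^2*(1-p)))/(lamz^2*p^2*(1-p)^2))
        (fun p => -k * (1-p)⁻¹) (Set.uIcc z a) := by
      intro p hp
      rw [Set.uIcc_of_ge haz] at hp
      obtain ⟨hpa, hpz⟩ := hp
      have hp0 : p ≠ 0 := by intro h; rw [h] at hpa; linarith
      have hp1 : (1:ℝ) - p ≠ 0 := by intro h; nlinarith
      simp only [hkdef]
      field_simp
    rw [intervalIntegral.integral_congr hEq, intervalIntegral.integral_const_mul]
    have hsub : (∫ p in z..a, (1-p)⁻¹) = ∫ x in (1-a)..(1-z), x⁻¹ := by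
      simpa using intervalIntegral.integral_comp_sub_left (fun x => x⁻¹) 1
    rw [hsub, integral_inv (Set.notMem_uIcc_of_lt h1a h1z),
      Real.log_div h1z.ne' h1a.ne', hCdef,
      Real.rpow_def_of_pos h1z, Real.rpow_def_of_pos h1a, ← Real.exp_add]
    exact congrArg Real.exp (by ring)
  refine ⟨⟨C, hC, key⟩, ?_⟩
  -- Step 2: divergence
  set M : ℝ := (1-z) ^ (-(2*k)) with hMdef
  have hM : 0 < M := Real.rpow_pos_of_pos h1z _
  set c₁ : ℝ := 2/(lamz^2*C*M) with hc1def
  have hc₁ : 0 < c₁ := by positivity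
  set c : ℝ := C * c₁ with hcdef
  have hc : 0 < c := by positivity
  have hs'pos : ∀ p ∈ Set.Ioc (0:ℝ) z, 0 < s' p := by
    intro p hp
    rw [key p hp]
    have := Real.rpow_pos_of_pos (show (0:ℝ) < 1 - p by
      have := hp.2; linarith) (-(2*k))
    positivity
  -- main pointwise bound
  have hmain : ∀ a ∈ Set.Ioo (0:ℝ) z, c * (a⁻¹ - z⁻¹) ≤ s' a * ∫ p in a..z, m p := by
    intro a ha
    obtain ⟨ha0, haz⟩ := ha
    have h1a : (0:ℝ) < 1 - a := by linarith
    have hsub : Set.uIcc a z ⊆ Set.Ioc (0:ℝ) z := by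
      rw [Set.uIcc_of_le haz.le]
      rintro p ⟨h1, h2⟩
      exact ⟨lt_of_lt_of_le ha0 h1, h2⟩
    set g : ℝ → ℝ := fun p => 2/(lamz^2*p^2*(1-p)^2*(C*(1-p) ^ (-(2*k)))) with hgdef
    have hEq : Set.EqOn m g (Set.uIcc a z) := by
      intro p hp
      rw [hm p (hsub hp), key p (hsub hp)]
    have hcont : ContinuousOn g (Set.uIcc a z) := by
      apply ContinuousOn.div continuousOn_const
      · apply ContinuousOn.mul
        · fun_prop
        · apply ContinuousOn.mul continuousOn_const
          apply ContinuousOn.rpow_const (by fun_prop)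
          intro p hp
          have := (hsub hp).2
          left; intro h; nlinarith
      · intro p hp
        obtain ⟨hp0, hpz⟩ := hsub hp
        have h1p : (0:ℝ) < 1 - p := by linarith
        have := Real.rpow_pos_of_pos h1p (-(2*k))
        positivity
    have hptle : ∀ p ∈ Set.uIcc a z, c₁ * (p ^ (-2:ℤ)) ≤ g p := by
      intro p hp
      obtain ⟨hp0, hpz⟩ := hsub hp
      have h1p : (0:ℝ) < 1 - p := by linarith
      have hrp : (0:ℝ) < (1-p) ^ (-(2*k)) := Real.rpow_pos_of_pos h1p _
      have hrple : (1-p) ^ (-(2*k)) ≤ M := by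
        rw [hMdef]
        exact Real.rpow_le_rpow_of_nonpos h1z (by linarith) (by nlinarith)
      have hD : (0:ℝ) < lamz^2*p^2*(1-p)^2*(C*(1-p) ^ (-(2*k))) := by positivity
      have hDle : lamz^2*p^2*(1-p)^2*(C*(1-p) ^ (-(2*k))) ≤ lamz^2*C*M*p^2 := by
        have h1p2 : (1-p)^2 ≤ 1 := by nlinarith
        have hrw : lamz^2*C*M*p^2 = lamz^2*p^2*1*(C*M) := by ring
        rw [hrw]
        gcongr
        all_goals first | exact h1p2 | exact hrple | exact hrp.le | positivity
      have : (2:ℝ)/(lamz^2*C*M*p^2) ≤ g p := by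
        rw [hgdef]
        exact div_le_div_of_nonneg_left (by norm_num) hD hDle
      refine le_trans (le_of_eq ?_) this
      have hp0' : p ≠ 0 := hp0.ne'
      have hL : lamz ^ 2 * C * M ≠ 0 := by positivity
      rw [hc1def, zpow_neg]
      field_simp
    have hint1 : IntervalIntegrable (fun p => c₁ * (p ^ (-2:ℤ))) volume a z := by
      apply ContinuousOn.intervalIntegrable
      apply ContinuousOn.mul continuousOn_const
      apply ContinuousOn.zpow₀ (by fun_prop)
      intro p hp
      left
      exact (hsub hp).1.ne'
    have hint2 : IntervalIntegrable m volume a z :=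
      (hcont.congr hEq).intervalIntegrable
    have hIle : (∫ p in a..z, c₁ * (p ^ (-2:ℤ))) ≤ ∫ p in a..z, m p := by
      apply intervalIntegral.integral_mono_on haz.le hint1 hint2
      intro p hp
      rw [hEq (Set.mem_uIcc_of_le hp.1 hp.2)]
      exact hptle p (Set.mem_uIcc_of_le hp.1 hp.2)
    have hIval : (∫ p in a..z, c₁ * (p ^ (-2:ℤ))) = c₁ * (a⁻¹ - z⁻¹) := by
      rw [intervalIntegral.integral_const_mul, integral_zpow
        (Or.inr ⟨by norm_num, Set.notMem_uIcc_of_lt ha0 hz0⟩)]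
      norm_num
      left
      ring
    have hInonneg : (0:ℝ) ≤ c₁ * (a⁻¹ - z⁻¹) := by
      have h1 : z⁻¹ ≤ a⁻¹ := inv_anti₀ ha0 haz.le
      nlinarith
    have hCles' : C ≤ s' a := by
      rw [key a ⟨ha0, haz.le⟩]
      have h1 : (1:ℝ) ≤ (1-a) ^ (-(2*k)) :=
        Real.one_le_rpow_of_pos_of_le_one_of_nonpos h1a (by linarith) (by nlinarith)
      nlinarith
    calc c * (a⁻¹ - z⁻¹) = C * (c₁ * (a⁻¹ - z⁻¹)) := by rw [hcdef]; ring
      _ ≤ s' a * ∫ p in a..z, m p := by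
          apply mul_le_mul hCles' (hIval ▸ hIle) hInonneg
          exact (hs'pos a ⟨ha0, haz.le⟩).le
  -- conclude divergence
  by_contra htop
  have hlb : ∫⁻ a in Set.Ioo (0:ℝ) z, ENNReal.ofReal (c * (a⁻¹ - z⁻¹))
      ≤ ∫⁻ a in Set.Ioo (0:ℝ) z, ENNReal.ofReal (s' a * ∫ p in a..z, m p) :=
    setLIntegral_mono' measurableSet_Ioo fun a ha => ENNReal.ofReal_le_ofReal (hmain a ha)
  have hfin : ∫⁻ a in Set.Ioo (0:ℝ) z, ENNReal.ofReal (c * (a⁻¹ - z⁻¹)) < ⊤ :=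
    lt_of_le_of_lt hlb (lt_top_iff_ne_top.mpr htop)
  set F : ℝ → ℝ := fun a => c * (a⁻¹ - z⁻¹) with hFdef
  have hFmeas : Measurable F := by fun_prop
  have hFint : IntegrableOn F (Set.Ioo (0:ℝ) z) := by
    refine ⟨hFmeas.aestronglyMeasurable.restrict, ?_⟩
    have hnn : 0 ≤ᵐ[volume.restrict (Set.Ioo (0:ℝ) z)] F := by
      rw [Filter.EventuallyLE, ae_restrict_iff' measurableSet_Ioo]
      filter_upwards with a ha
      have h1 : z⁻¹ ≤ a⁻¹ := inv_anti₀ ha.1 ha.2.le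
      have h2 : 0 ≤ a⁻¹ - z⁻¹ := by linarith
      positivity
    rw [hasFiniteIntegral_iff_ofReal hnn]
    exact hfin
  have hinvint : IntegrableOn (fun a : ℝ => a⁻¹) (Set.Ioo (0:ℝ) z) := by
    have h1 : IntegrableOn (fun a => F a / c + z⁻¹) (Set.Ioo (0:ℝ) z) :=
      (hFint.div_const c).add ((integrableOn_const_iff).mpr (Or.inr measure_Ioo_lt_top))
    refine h1.congr_fun ?_ measurableSet_Ioo
    intro a ha
    show c * (a⁻¹ - z⁻¹) / c + z⁻¹ = a⁻¹
    rw [mul_div_cancel_left₀ _ hc.ne', sub_add_cancel]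
  have hIoc : IntegrableOn (fun a : ℝ => a⁻¹) (Set.Ioc (0:ℝ) z) :=
    (integrableOn_Ioc_iff_integrableOn_Ioo).mpr hinvint
  have hII : IntervalIntegrable (fun a : ℝ => a⁻¹) volume 0 z :=
    (intervalIntegrable_iff_integrableOn_Ioc_of_le hz0.le).mpr hIoc
  rcases intervalIntegrable_inv_iff.mp hII with h | h
  · exact hz0.ne h
  · exact h (Set.left_mem_uIcc)
end

section
/- Fix z ∈ (0,1), constants λ̄ ≥ λ_z > 0, and define the scale density s'(a) = exp(−2∫_z^a (λ̄²p(1−p))/(λ_z²p²(1−p)²) dp) for a ∈ [z, 1). Then s'(a) = D₁(z)·((1−a)/a)^{2(λ̄/λ_z)²} for a constant D₁(z) > 0, and with speed density m(p) = 2/(λ_z²p²(1−p)²s'(p)), the Feller integral ∫_z^1 s'(a)·(∫_z^a m(p) dp) da diverges to +∞. -/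
open MeasureTheory

lemma aux_inv_lintegral_top (b c0 : ℝ) (hb : b < 1) (hc0 : 0 < c0) :
    ∫⁻ x in Set.Ioo b 1, ENNReal.ofReal (c0 * (1-x)⁻¹) = ⊤ := by
  by_contra hne
  have hmeas : AEStronglyMeasurable (fun x : ℝ => c0 * (1-x)⁻¹)
      (volume.restrict (Set.Ioo b 1)) :=
    (measurable_const.mul ((measurable_const.sub measurable_id).inv)).aestronglyMeasurable
  have hpos : 0 ≤ᵐ[volume.restrict (Set.Ioo b 1)] fun x => c0 * (1-x)⁻¹ := by
    filter_upwards [ae_restrict_mem measurableSet_Ioo] with x hx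
    have h1x : (0:ℝ) < 1 - x := by linarith [hx.2]
    positivity
  have hint : Integrable (fun x : ℝ => c0 * (1-x)⁻¹) (volume.restrict (Set.Ioo b 1)) :=
    (lintegral_ofReal_ne_top_iff_integrable hmeas hpos).1 hne
  have hint2 : IntegrableOn (fun x : ℝ => (1-x)⁻¹) (Set.Ioo b 1) := by
    have h := hint.const_mul c0⁻¹
    have he : (fun x : ℝ => c0⁻¹ * (c0 * (1-x)⁻¹)) = fun x : ℝ => (1-x)⁻¹ := by
      funext x; rw [← mul_assoc, inv_mul_cancel₀ (ne_of_gt hc0), one_mul]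
    rwa [he] at h
  have hII : IntervalIntegrable (fun x : ℝ => (1-x)⁻¹) volume b 1 := by
    rw [intervalIntegrable_iff_integrableOn_Ioo_of_le hb.le]; exact hint2
  have hII2 : IntervalIntegrable (fun x : ℝ => (x - 1)⁻¹) volume b 1 := by
    have he : (fun x : ℝ => (x - 1)⁻¹) = fun x : ℝ => -((1-x)⁻¹) := by
      funext x; rw [show x - 1 = -(1-x) by ring, inv_neg]
    rw [he]; exact hII.neg
  rcases intervalIntegrable_sub_inv_iff.1 hII2 with h | h
  · exact hb.ne h
  · exact h Set.right_mem_uIcc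

theorem stmt5 (z lamz lbar : ℝ) (hz : z ∈ Set.Ioo (0:ℝ) 1)
    (hlamz : 0 < lamz) (hle : lamz ≤ lbar)
    (s' m : ℝ → ℝ)
    (hs' : ∀ a ∈ Set.Ico z 1,
      s' a = Real.exp (-2 * ∫ p in z..a,
        (lbar^2*p*(1-p))/(lamz^2*p^2*(1-p)^2)))
    (hm : ∀ p ∈ Set.Ico z 1, m p = 2/(lamz^2*p^2*(1-p)^2*s' p)) :
    (∃ D1 > 0, ∀ a ∈ Set.Ico z 1,
        s' a = D1 * ((1-a)/a) ^ (2*(lbar/lamz)^2)) ∧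
    ∫⁻ a in Set.Ioo z 1, ENNReal.ofReal (s' a * ∫ p in z..a, m p) = ⊤ := by
  obtain ⟨hz0, hz1⟩ := hz
  set k : ℝ := (lbar/lamz)^2 with hkdef
  have hk1 : 1 ≤ k := by
    have h1 : 1 ≤ lbar / lamz := (one_le_div hlamz).2 hle
    nlinarith
  set K : ℝ := 2*k with hKdef
  have hK2 : 2 ≤ K := by simp only [hKdef]; linarith
  have hKpos : 0 < K := by linarith
  have h1z : (0:ℝ) < 1 - z := by linarith
  set D1 : ℝ := (z/(1-z))^K with hD1def
  have hD1 : 0 < D1 := Real.rpow_pos_of_pos (div_pos hz0 h1z) K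
  -- Step A: the explicit formula for s'
  have hformula : ∀ a ∈ Set.Ico z 1, s' a = D1 * ((1-a)/a) ^ K := by
    intro a ha
    obtain ⟨hza, ha1⟩ := ha
    have ha0 : 0 < a := lt_of_lt_of_le hz0 hza
    have h1a : (0:ℝ) < 1 - a := by linarith
    have hmem : ∀ p ∈ Set.uIcc z a, 0 < p ∧ p < 1 := by
      intro p hp
      rw [Set.uIcc_of_le hza] at hp
      exact ⟨lt_of_lt_of_le hz0 hp.1, lt_of_le_of_lt hp.2 ha1⟩
    have hcong : (∫ p in z..a, (lbar^2*p*(1-p))/(lamz^2*p^2*(1-p)^2))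
        = ∫ p in z..a, k * (p⁻¹ + (1-p)⁻¹) := by
      apply intervalIntegral.integral_congr
      intro p hp
      obtain ⟨hp0, hp1⟩ := hmem p hp
      have h1p : (0:ℝ) < 1 - p := by linarith
      have hne1 : p ≠ 0 := ne_of_gt hp0
      have hne2 : (1:ℝ) - p ≠ 0 := ne_of_gt h1p
      have hne3 : lamz ≠ 0 := ne_of_gt hlamz
      field_simp [hkdef]
      rw [hkdef, div_pow]; field_simp; ring
    have hderiv : ∀ p ∈ Set.uIcc z a,
        HasDerivAt (fun y => k * (Real.log y - Real.log (1-y))) (k * (p⁻¹ + (1-p)⁻¹)) p := by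
      intro p hp
      obtain ⟨hp0, hp1⟩ := hmem p hp
      have h1p : (1:ℝ) - p ≠ 0 := by intro h; nlinarith
      have hd2 : HasDerivAt (fun y : ℝ => 1 - y) (-1) p := by
        simpa using (hasDerivAt_id p).const_sub 1
      have hd3 : HasDerivAt (fun y : ℝ => Real.log (1 - y)) ((1-p)⁻¹ * (-1)) p :=
        (Real.hasDerivAt_log h1p).comp p hd2
      have hd := ((Real.hasDerivAt_log (ne_of_gt hp0)).sub hd3).const_mul k
      exact hd.congr_deriv (by ring)
    have hint : IntervalIntegrable (fun p : ℝ => k * (p⁻¹ + (1-p)⁻¹)) volume z a := by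
      apply ContinuousOn.intervalIntegrable
      apply continuousOn_const.mul
      apply ContinuousOn.add
      · exact continuousOn_id.inv₀ fun p hp => ne_of_gt (hmem p hp).1
      · exact (continuousOn_const.sub continuousOn_id).inv₀
          fun p hp => by
            have := (hmem p hp).2; intro h; simp only [Pi.sub_apply, id_eq] at h; nlinarith
    have hftc := intervalIntegral.integral_eq_sub_of_hasDerivAt hderiv hint
    rw [hs' a ⟨hza, ha1⟩, hcong, hftc, hD1def,
      Real.rpow_def_of_pos (div_pos hz0 h1z), Real.rpow_def_of_pos (div_pos h1a ha0),
      Real.log_div (ne_of_gt hz0) (ne_of_gt h1z), Real.log_div (ne_of_gt h1a) (ne_of_gt ha0),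
      ← Real.exp_add]
    congr 1
    simp only [hKdef]
    ring
  refine ⟨⟨D1, hD1, hformula⟩, ?_⟩
  -- Step B: divergence of the Feller integral
  have hmform : ∀ p ∈ Set.Ico z 1,
      m p = (2/(lamz^2*D1)) * (p^(K-2) * (1-p)^(-(K+2))) := by
    rintro p ⟨hzp, hp1⟩
    have hp0 : 0 < p := lt_of_lt_of_le hz0 hzp
    have h1p : (0:ℝ) < 1 - p := by linarith
    rw [hm p ⟨hzp, hp1⟩, hformula p ⟨hzp, hp1⟩, Real.div_rpow h1p.le hp0.le]
    have e1 : p^(K-2) = p^K / p^(2:ℕ) := by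
      rw [Real.rpow_sub hp0, ← Real.rpow_natCast p 2]
      norm_num
    have e2 : (1-p)^(-(K+2)) = ((1-p)^K * (1-p)^(2:ℕ))⁻¹ := by
      rw [← Real.rpow_natCast (1-p) 2, ← Real.rpow_add h1p, ← Real.rpow_neg h1p.le]
      norm_num
    rw [e1, e2]
    have hpK : (0:ℝ) < p^K := Real.rpow_pos_of_pos hp0 K
    have h1pK : (0:ℝ) < (1-p)^K := Real.rpow_pos_of_pos h1p K
    have h1 : p ≠ 0 := ne_of_gt hp0
    have h2 : (1:ℝ) - p ≠ 0 := ne_of_gt h1p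
    have h3 : lamz ≠ 0 := ne_of_gt hlamz
    have h4 : D1 ≠ 0 := ne_of_gt hD1
    have h5 : p^K ≠ 0 := ne_of_gt hpK
    have h6 : (1-p)^K ≠ 0 := ne_of_gt h1pK
    field_simp
  set c : ℝ := (2/(lamz^2*D1)) * z^(K-2) with hcdef
  have hcpos : 0 < c := by
    have : (0:ℝ) < z^(K-2) := Real.rpow_pos_of_pos hz0 _
    positivity
  have hK1 : (0:ℝ) < K + 1 := by linarith
  -- the lower bound for the inner integral
  have hlow : ∀ a, z ≤ a → a < 1 →
      (c/(K+1)) * ((1-a)^(-(K+1)) - (1-z)^(-(K+1))) ≤ ∫ p in z..a, m p := by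
    intro a hza ha1
    have hmem : ∀ p ∈ Set.uIcc z a, 0 < p ∧ p < 1 := by
      intro p hp
      rw [Set.uIcc_of_le hza] at hp
      exact ⟨lt_of_lt_of_le hz0 hp.1, lt_of_le_of_lt hp.2 ha1⟩
    have hcont1 : ContinuousOn (fun p : ℝ => (2/(lamz^2*D1)) * (p^(K-2) * (1-p)^(-(K+2))))
        (Set.uIcc z a) := by
      apply continuousOn_const.mul
      apply ContinuousOn.mul
      · exact continuousOn_id.rpow_const fun p hp => Or.inl (ne_of_gt (hmem p hp).1)
      · exact (continuousOn_const.sub continuousOn_id).rpow_const fun p hp => Or.inl (by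
          have := (hmem p hp).2; simp only [Pi.sub_apply, id_eq]; intro h; nlinarith)
    have hcont2 : ContinuousOn (fun p : ℝ => c * (1-p)^(-(K+2))) (Set.uIcc z a) := by
      apply continuousOn_const.mul
      exact (continuousOn_const.sub continuousOn_id).rpow_const fun p hp => Or.inl (by
        have := (hmem p hp).2; simp only [Pi.sub_apply, id_eq]; intro h; nlinarith)
    have hcongm : (∫ p in z..a, m p)
        = ∫ p in z..a, (2/(lamz^2*D1)) * (p^(K-2) * (1-p)^(-(K+2))) := by
      apply intervalIntegral.integral_congr
      intro p hp
      rw [Set.uIcc_of_le hza] at hp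
      exact hmform p ⟨hp.1, lt_of_le_of_lt hp.2 ha1⟩
    have hderiv : ∀ p ∈ Set.uIcc z a, HasDerivAt (fun y : ℝ => (c/(K+1)) * (1-y)^(-(K+1)))
        (c * (1-p)^(-(K+2))) p := by
      intro p hp
      have h1p : (0:ℝ) < 1 - p := by have := (hmem p hp).2; linarith
      have hd2 : HasDerivAt (fun y : ℝ => 1 - y) (-1) p := by
        simpa using (hasDerivAt_id p).const_sub 1
      have hd : HasDerivAt (fun y : ℝ => (1-y)^(-(K+1)))
          ((-(K+1) * (1-p)^(-(K+1)-1)) * (-1)) p :=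
        (Real.hasDerivAt_rpow_const (p := -(K+1)) (Or.inl (ne_of_gt h1p))).comp p hd2
      have hd' := hd.const_mul (c/(K+1))
      refine hd'.congr_deriv ?_
      rw [show (-(K+1):ℝ)-1 = -(K+2) by ring]
      field_simp
    have hftc := intervalIntegral.integral_eq_sub_of_hasDerivAt hderiv
      (hcont2.intervalIntegrable)
    have hmono : (∫ p in z..a, c * (1-p)^(-(K+2)))
        ≤ ∫ p in z..a, (2/(lamz^2*D1)) * (p^(K-2) * (1-p)^(-(K+2))) := by
      apply intervalIntegral.integral_mono_on hza hcont2.intervalIntegrable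
        hcont1.intervalIntegrable
      intro p hp
      have hp0 : 0 < p := lt_of_lt_of_le hz0 hp.1
      have h1p : (0:ℝ) < 1 - p := by have := lt_of_le_of_lt hp.2 ha1; linarith
      rw [hcdef]
      have hzp : z^(K-2) ≤ p^(K-2) := Real.rpow_le_rpow hz0.le hp.1 (by linarith)
      have hX : (0:ℝ) ≤ (1-p)^(-(K+2)) := Real.rpow_nonneg h1p.le _
      have hC : (0:ℝ) ≤ 2/(lamz^2*D1) := by positivity
      calc 2/(lamz^2*D1) * z^(K-2) * (1-p)^(-(K+2))
          ≤ 2/(lamz^2*D1) * p^(K-2) * (1-p)^(-(K+2)) := by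
            apply mul_le_mul_of_nonneg_right _ hX
            exact mul_le_mul_of_nonneg_left hzp hC
        _ = 2/(lamz^2*D1) * (p^(K-2) * (1-p)^(-(K+2))) := by ring
    rw [hcongm]
    calc (c/(K+1)) * ((1-a)^(-(K+1)) - (1-z)^(-(K+1)))
        = (c/(K+1)) * (1-a)^(-(K+1)) - (c/(K+1)) * (1-z)^(-(K+1)) := by ring
      _ = ∫ p in z..a, c * (1-p)^(-(K+2)) := hftc.symm
      _ ≤ _ := hmono
  -- constants
  set C : ℝ := D1 * c / (K+1) with hCdef
  have hCpos : 0 < C := by positivity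
  set C0 : ℝ := (1-z)^(-(K+1)) with hC0def
  have hC0pos : 0 < C0 := Real.rpow_pos_of_pos h1z _
  set C' : ℝ := C * C0 with hC'def
  have hC'pos : 0 < C' := by positivity
  set δ : ℝ := min (1-z) (C/(2*C')) with hδdef
  have hδpos : 0 < δ := lt_min h1z (by positivity)
  set a1 : ℝ := 1 - δ with ha1def
  have ha1lt : a1 < 1 := by simp only [ha1def]; linarith
  have hza1 : z ≤ a1 := by
    have : δ ≤ 1 - z := min_le_left _ _
    simp only [ha1def]; linarith
  -- pointwise bound on (a1, 1)
  have hmain : ∀ a ∈ Set.Ioo a1 1, (C/2) * (1-a)⁻¹ ≤ s' a * ∫ p in z..a, m p := by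
    rintro a ⟨haa1, ha1'⟩
    have hza : z ≤ a := le_of_lt (lt_of_le_of_lt hza1 haa1)
    have ha0 : 0 < a := lt_of_lt_of_le hz0 hza
    have h1a : (0:ℝ) < 1 - a := by linarith
    have hs'a : s' a = D1 * ((1-a)/a)^K := hformula a ⟨hza, ha1'⟩
    have hL := hlow a hza ha1'
    have hmono0 : C0 ≤ (1-a)^(-(K+1)) := by
      rw [hC0def]
      exact Real.rpow_le_rpow_of_nonpos h1a (by linarith) (by linarith)
    have hLpos : (0:ℝ) ≤ (c/(K+1)) * ((1-a)^(-(K+1)) - C0) := by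
      apply mul_nonneg (by positivity)
      linarith
    have hs'pos : 0 < s' a := by
      rw [hs'a]; exact mul_pos hD1 (Real.rpow_pos_of_pos (div_pos h1a ha0) K)
    have step1 : s' a * ((c/(K+1)) * ((1-a)^(-(K+1)) - C0)) ≤ s' a * ∫ p in z..a, m p :=
      mul_le_mul_of_nonneg_left hL hs'pos.le
    have hbase : 1 - a ≤ (1-a)/a := by
      rw [le_div_iff₀ ha0]
      have h := mul_le_mul_of_nonneg_left ha1'.le h1a.le
      linarith
    have hrpow : (1-a)^K ≤ ((1-a)/a)^K := Real.rpow_le_rpow h1a.le hbase hKpos.le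
    have step2 : D1 * (1-a)^K * ((c/(K+1)) * ((1-a)^(-(K+1)) - C0))
        ≤ s' a * ((c/(K+1)) * ((1-a)^(-(K+1)) - C0)) := by
      rw [hs'a]
      exact mul_le_mul_of_nonneg_right (mul_le_mul_of_nonneg_left hrpow hD1.le) hLpos
    have hE : (1-a)^K * (1-a)^(-(K+1)) = (1-a)⁻¹ := by
      rw [← Real.rpow_add h1a, show K + -(K+1) = (-1:ℝ) by ring, Real.rpow_neg_one]
    have step3 : D1 * (1-a)^K * ((c/(K+1)) * ((1-a)^(-(K+1)) - C0))
        = C * (1-a)⁻¹ - C * C0 * (1-a)^K := by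
      rw [hCdef, ← hE]; ring
    have hQ : (1-a)^K ≤ 1 := Real.rpow_le_one h1a.le (by linarith) hKpos.le
    have hQ2 : C * C0 * (1-a)^K ≤ C' := by
      rw [hC'def]
      exact mul_le_of_le_one_right (by positivity) hQ
    have hδa : 1 - a ≤ C/(2*C') := by
      have h1 : 1 - a ≤ δ := by simp only [ha1def] at haa1; linarith
      exact h1.trans (min_le_right _ _)
    have hC'bound : C' ≤ (C/2) * (1-a)⁻¹ := by
      rw [mul_comm, ← div_eq_inv_mul, le_div_iff₀ h1a]
      calc C' * (1-a) ≤ C' * (C/(2*C')) :=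
            mul_le_mul_of_nonneg_left hδa hC'pos.le
        _ = C/2 := by field_simp
    linarith [step1, step2, step3.ge, step3.le]
  -- conclude
  have htop := aux_inv_lintegral_top a1 (C/2) ha1lt (by positivity)
  have hle1 : (⊤:ENNReal) ≤ ∫⁻ a in Set.Ioo z 1, ENNReal.ofReal (s' a * ∫ p in z..a, m p) := by
    calc (⊤:ENNReal) = ∫⁻ x in Set.Ioo a1 1, ENNReal.ofReal ((C/2) * (1-x)⁻¹) := htop.symm
      _ ≤ ∫⁻ a in Set.Ioo a1 1, ENNReal.ofReal (s' a * ∫ p in z..a, m p) :=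
          setLIntegral_mono' measurableSet_Ioo fun a ha =>
            ENNReal.ofReal_le_ofReal (hmain a ha)
      _ ≤ ∫⁻ a in Set.Ioo z 1, ENNReal.ofReal (s' a * ∫ p in z..a, m p) :=
          lintegral_mono_set (Set.Ioo_subset_Ioo hza1 le_rfl)
  exact top_unique hle1
end

section
/- Let r > 0, c > 0, λ̄ > λ̲ > 0 with c − (λ̄ − λ̲)² ≥ 0, and 0 < b₁* < b₂* < 1. Suppose v ∈ C((0,1)) ∩ C¹((b₁*,1)) ∩ C²((b₁*,b₂*)∪(b₂*,1)) satisfies the ODE system: (λ̄²p²(1−p)²/2)v'' + λ̄²(1−p)²p·v' − rv + c − (λ̄−λ̲)² = 0 on (b₁*,b₂*), (λ̲²p²(1−p)²/2)v'' + λ̲²(1−p)²p·v' − rv + c = 0 on (b₂*,1), with v(b₁*) = 0 and v(1) = c/r. Then v(p) < c/r for all p ∈ (b₁*, 1). -/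
open Set

private lemma smOn {f f' : ℝ → ℝ} {a b : ℝ} (hf : ContinuousOn f (Icc a b))
    (hd : ∀ x ∈ Ioo a b, HasDerivAt f (f' x) x) (hpos : ∀ x ∈ Ioo a b, 0 < f' x) :
    StrictMonoOn f (Icc a b) := by
  apply strictMonoOn_of_deriv_pos (convex_Icc a b) hf
  intro x hx
  rw [interior_Icc] at hx
  rw [(hd x hx).deriv]
  exact hpos x hx

private lemma saOn {f f' : ℝ → ℝ} {a b : ℝ} (hf : ContinuousOn f (Icc a b))
    (hd : ∀ x ∈ Ioo a b, HasDerivAt f (f' x) x) (hneg : ∀ x ∈ Ioo a b, f' x < 0) :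
    StrictAntiOn f (Icc a b) := by
  apply strictAntiOn_of_deriv_neg (convex_Icc a b) hf
  intro x hx
  rw [interior_Icc] at hx
  rw [(hd x hx).deriv]
  exact hneg x hx

private lemma mOn {f f' : ℝ → ℝ} {a b : ℝ} (hf : ContinuousOn f (Icc a b))
    (hd : ∀ x ∈ Ioo a b, HasDerivAt f (f' x) x) (hpos : ∀ x ∈ Ioo a b, 0 ≤ f' x) :
    MonotoneOn f (Icc a b) := by
  apply monotoneOn_of_deriv_nonneg (convex_Icc a b) hf
  · intro x hx
    rw [interior_Icc] at hx
    exact (hd x hx).differentiableAt.differentiableWithinAt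
  · intro x hx
    rw [interior_Icc] at hx
    rw [(hd x hx).deriv]
    exact hpos x hx

private lemma aOn {f f' : ℝ → ℝ} {a b : ℝ} (hf : ContinuousOn f (Icc a b))
    (hd : ∀ x ∈ Ioo a b, HasDerivAt f (f' x) x) (hpos : ∀ x ∈ Ioo a b, f' x ≤ 0) :
    AntitoneOn f (Icc a b) := by
  apply antitoneOn_of_deriv_nonpos (convex_Icc a b) hf
  · intro x hx
    rw [interior_Icc] at hx
    exact (hd x hx).differentiableAt.differentiableWithinAt
  · intro x hx
    rw [interior_Icc] at hx
    rw [(hd x hx).deriv]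
    exact hpos x hx

set_option maxHeartbeats 2000000 in
theorem stmt6 (r c l L b1 b2 : ℝ) (v v' v'' : ℝ → ℝ)
    (hr : 0 < r) (hc : 0 < c) (hl : 0 < l) (hlL : l < L)
    (hcost : 0 ≤ c - (L - l)^2)
    (hb1 : 0 < b1) (hb12 : b1 < b2) (hb2 : b2 < 1)
    (hcont : ContinuousOn v (Set.Ioc 0 1))
    (hd1 : ∀ p ∈ Set.Ioo b1 1, HasDerivAt v (v' p) p)
    (hC1 : ContinuousOn v' (Set.Ioo b1 1))
    (hd2 : ∀ p ∈ Set.Ioo b1 b2 ∪ Set.Ioo b2 1, HasDerivAt v' (v'' p) p)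
    (hODE1 : ∀ p ∈ Set.Ioo b1 b2,
      L^2*p^2*(1-p)^2/2 * v'' p + L^2*(1-p)^2*p * v' p - r * v p + c - (L-l)^2 = 0)
    (hODE2 : ∀ p ∈ Set.Ioo b2 1,
      l^2*p^2*(1-p)^2/2 * v'' p + l^2*(1-p)^2*p * v' p - r * v p + c = 0)
    (hvb1 : v b1 = 0) (hv1 : v 1 = c/r) :
    ∀ p ∈ Set.Ioo b1 1, v p < c/r := by
  have hL : (0:ℝ) < L := lt_trans hl hlL
  have hk : (0:ℝ) < (L - l)^2 := by
    have : (0:ℝ) < L - l := by linarith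
    positivity
  have hcr : (0:ℝ) < c / r := div_pos hc hr
  have hsub : Icc b1 1 ⊆ Ioc 0 1 := fun x hx => ⟨lt_of_lt_of_le hb1 hx.1, hx.2⟩
  have hvc : ContinuousOn v (Icc b1 1) := hcont.mono hsub
  have hcA : ∀ p ∈ Ioo b1 1, ContinuousAt v p := by
    intro p hp
    apply hcont.continuousAt
    rw [mem_nhds_iff]
    exact ⟨Ioo 0 1, Ioo_subset_Ioc_self, isOpen_Ioo, ⟨lt_trans hb1 hp.1, hp.2⟩⟩
  have hucont : ContinuousOn (fun x => x^2 * v' x) (Ioo b1 1) :=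
    (continuous_pow 2).continuousOn.mul hC1
  -- derivative of u(x) = x^2 * v' x, using the ODEs
  have hud1 : ∀ p ∈ Ioo b1 b2, HasDerivAt (fun x => x^2 * v' x)
      (2*(r*v p - c + (L-l)^2)/(L^2*(1-p)^2)) p := by
    intro p hp
    have h1p : (0:ℝ) < 1 - p := by
      have : p < 1 := lt_trans hp.2 hb2
      linarith
    have h := (hasDerivAt_pow 2 p).mul (hd2 p (Set.mem_union_left _ hp))
    refine h.congr_deriv ?_
    symm
    have hode := hODE1 p hp
    rw [div_eq_iff (ne_of_gt (mul_pos (pow_pos hL 2) (pow_pos h1p 2)))]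
    push_cast
    linear_combination (-2 : ℝ) * hode
  have hud2 : ∀ p ∈ Ioo b2 1, HasDerivAt (fun x => x^2 * v' x)
      (2*(r*v p - c)/(l^2*(1-p)^2)) p := by
    intro p hp
    have h1p : (0:ℝ) < 1 - p := by linarith [hp.2]
    have h := (hasDerivAt_pow 2 p).mul (hd2 p (Set.mem_union_right _ hp))
    refine h.congr_deriv ?_
    symm
    have hode := hODE2 p hp
    rw [div_eq_iff (ne_of_gt (mul_pos (pow_pos hl 2) (pow_pos h1p 2)))]
    push_cast
    linear_combination (-2 : ℝ) * hode
  -- Stage 1 : v ≤ c/r on [b1, 1]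
  have hstage1 : ∀ p ∈ Icc b1 1, v p ≤ c / r := by
    by_contra hcontra
    push_neg at hcontra
    obtain ⟨q, hq, hqgt⟩ := hcontra
    obtain ⟨p0, hp0mem, hmax⟩ :=
      isCompact_Icc.exists_isMaxOn ⟨b1, left_mem_Icc.2 (by linarith)⟩ hvc
    have hM : c / r < v p0 := lt_of_lt_of_le hqgt (hmax hq)
    have h1 : b1 < p0 := by
      rcases eq_or_lt_of_le hp0mem.1 with h | h
      · rw [← h, hvb1] at hM; linarith
      · exact h
    have h2 : p0 < 1 := by
      rcases eq_or_lt_of_le hp0mem.2 with h | h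
      · rw [h, hv1] at hM; linarith
      · exact h
    have hp0i : p0 ∈ Ioo b1 1 := ⟨h1, h2⟩
    have hloc : IsLocalMax v p0 := hmax.isLocalMax (Icc_mem_nhds (by linarith) (by linarith))
    have hv'0 : v' p0 = 0 := hloc.hasDerivAt_eq_zero (hd1 p0 hp0i)
    have hev : ∀ᶠ p in nhds p0, c / r < v p :=
      (hcA p0 hp0i).eventually (eventually_gt_nhds hM)
    obtain ⟨δ, hδ, hball⟩ := Metric.eventually_nhds_iff.1 hev
    have key : ∀ (b : ℝ) (w : ℝ → ℝ), p0 < b → b < 1 →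
        (∀ x ∈ Ioo p0 b, HasDerivAt (fun y => y^2 * v' y) (w x) x ∧ 0 < w x) → False := by
      intro b w hpb hbl hw
      have hIccsub : Icc p0 b ⊆ Ioo b1 1 :=
        fun x hx => ⟨lt_of_lt_of_le h1 hx.1, lt_of_le_of_lt hx.2 hbl⟩
      have husm : StrictMonoOn (fun y => y^2 * v' y) (Icc p0 b) :=
        smOn (hucont.mono hIccsub) (fun x hx => (hw x hx).1) (fun x hx => (hw x hx).2)
      have hvpos : ∀ x ∈ Ioo p0 b, 0 < v' x := by
        intro x hx
        have h0 : p0^2 * v' p0 < x^2 * v' x :=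
          husm (left_mem_Icc.2 hpb.le) ⟨hx.1.le, hx.2.le⟩ hx.1
        rw [hv'0, mul_zero] at h0
        have hx0 : (0:ℝ) < x := lt_trans (lt_trans hb1 h1) hx.1
        nlinarith [pow_pos hx0 2]
      have hvsm : StrictMonoOn v (Icc p0 b) := by
        apply smOn (hvc.mono (fun x hx => ⟨le_trans h1.le hx.1, le_of_lt (lt_of_le_of_lt hx.2 hbl)⟩))
          (fun x hx => hd1 x (hIccsub (Ioo_subset_Icc_self hx))) hvpos
      have h7 : v p0 < v b := hvsm (left_mem_Icc.2 hpb.le) (right_mem_Icc.2 hpb.le) hpb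
      have hble : v b ≤ v p0 := hmax ⟨le_trans h1.le hpb.le, hbl.le⟩
      linarith
    by_cases hcase : p0 < b2
    · apply key (min (p0 + δ/2) ((p0 + b2)/2))
        (fun x => 2*(r*v x - c + (L-l)^2)/(L^2*(1-x)^2))
        (lt_min (by linarith) (by linarith))
        (lt_of_le_of_lt (min_le_right _ _) (by linarith))
      intro x hx
      have hxb2 : x < b2 := by
        have := lt_of_lt_of_le hx.2 (min_le_right _ _); linarith
      have hxm : x ∈ Ioo b1 b2 := ⟨lt_trans h1 hx.1, hxb2⟩
      have hdist : dist x p0 < δ := by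
        rw [Real.dist_eq, abs_lt]
        have := lt_of_lt_of_le hx.2 (min_le_left _ _)
        constructor <;> linarith [hx.1]
      have hvx : c/r < v x := hball hdist
      have h1x : (0:ℝ) < 1 - x := by linarith [hxm.2]
      refine ⟨hud1 x hxm, ?_⟩
      have hnum : 0 < r * v x - c + (L-l)^2 := by
        rw [div_lt_iff₀ hr] at hvx
        nlinarith
      exact div_pos (by linarith) (mul_pos (pow_pos hL 2) (pow_pos h1x 2))
    · push_neg at hcase
      apply key (min (p0 + δ/2) ((p0 + 1)/2))
        (fun x => 2*(r*v x - c)/(l^2*(1-x)^2))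
        (lt_min (by linarith) (by linarith))
        (lt_of_le_of_lt (min_le_right _ _) (by linarith))
      intro x hx
      have hx1 : x < 1 := by
        have := lt_of_lt_of_le hx.2 (min_le_right _ _); linarith
      have hxm : x ∈ Ioo b2 1 := ⟨lt_of_le_of_lt hcase hx.1, hx1⟩
      have hdist : dist x p0 < δ := by
        rw [Real.dist_eq, abs_lt]
        have := lt_of_lt_of_le hx.2 (min_le_left _ _)
        constructor <;> linarith [hx.1]
      have hvx : c/r < v x := hball hdist
      have h1x : (0:ℝ) < 1 - x := by linarith
      refine ⟨hud2 x hxm, ?_⟩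
      have hnum : 0 < r * v x - c := by
        rw [div_lt_iff₀ hr] at hvx
        nlinarith
      exact div_pos (by linarith) (mul_pos (pow_pos hl 2) (pow_pos h1x 2))
  -- the "leftward" contradiction at an interior maximum in (b1, b2]
  have hleft : ∀ p0, b1 < p0 → p0 ≤ b2 → (∀ x ∈ Icc b1 1, v x ≤ v p0) → v p0 = c / r → False := by
    intro p0 h1 h2 hmax hveq
    have hp0i : p0 ∈ Ioo b1 1 := ⟨h1, lt_of_le_of_lt h2 hb2⟩
    have hloc : IsLocalMax v p0 :=
      Filter.eventually_of_mem (Icc_mem_nhds h1 hp0i.2) hmax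
    have hv'0 : v' p0 = 0 := hloc.hasDerivAt_eq_zero (hd1 p0 hp0i)
    have hlt : (c - (L-l)^2)/r < v p0 := by
      rw [hveq, div_lt_div_iff₀ hr hr]
      nlinarith
    have hev := (hcA p0 hp0i).eventually (eventually_gt_nhds hlt)
    obtain ⟨δ, hδ, hball⟩ := Metric.eventually_nhds_iff.1 hev
    set a := max (p0 - δ/2) ((b1 + p0)/2) with ha_def
    have hap : a < p0 := max_lt (by linarith) (by linarith)
    have hba : b1 < a := lt_of_lt_of_le (by linarith : b1 < (b1 + p0)/2) (le_max_right _ _)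
    have ha0 : (0:ℝ) < a := lt_trans hb1 hba
    have hsub2 : Icc a p0 ⊆ Ioo b1 1 :=
      fun x hx => ⟨lt_of_lt_of_le hba hx.1, lt_of_le_of_lt hx.2 hp0i.2⟩
    have hw : ∀ x ∈ Ioo a p0,
        HasDerivAt (fun y => y^2*v' y) (2*(r*v x - c + (L-l)^2)/(L^2*(1-x)^2)) x ∧
        0 < 2*(r*v x - c + (L-l)^2)/(L^2*(1-x)^2) := by
      intro x hx
      have hxm : x ∈ Ioo b1 b2 := ⟨lt_trans hba hx.1, lt_of_lt_of_le hx.2 h2⟩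
      have hdist : dist x p0 < δ := by
        rw [Real.dist_eq, abs_lt]
        have hal : p0 - δ/2 ≤ a := le_max_left _ _
        constructor <;> linarith [hx.1, hx.2]
      have hvx := hball hdist
      rw [div_lt_iff₀ hr] at hvx
      have h1x : (0:ℝ) < 1 - x := by linarith [hxm.2]
      exact ⟨hud1 x hxm, div_pos (by nlinarith) (mul_pos (pow_pos hL 2) (pow_pos h1x 2))⟩
    have husm : StrictMonoOn (fun y => y^2*v' y) (Icc a p0) :=
      smOn (hucont.mono hsub2) (fun x hx => (hw x hx).1) (fun x hx => (hw x hx).2)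
    have hvneg : ∀ x ∈ Ioo a p0, v' x < 0 := by
      intro x hx
      have h0 : x^2 * v' x < p0^2 * v' p0 :=
        husm ⟨hx.1.le, hx.2.le⟩ (right_mem_Icc.2 hap.le) hx.2
      rw [hv'0, mul_zero] at h0
      have hx0 : (0:ℝ) < x := lt_trans ha0 hx.1
      nlinarith [pow_pos hx0 2]
    have hvsa : StrictAntiOn v (Icc a p0) := by
      apply saOn (hvc.mono (fun x hx => ⟨le_trans hba.le hx.1, le_trans hx.2 hp0i.2.le⟩))
        (fun x hx => hd1 x (hsub2 (Ioo_subset_Icc_self hx))) hvneg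
    have h7 : v p0 < v a := hvsa (left_mem_Icc.2 hap.le) (right_mem_Icc.2 hap.le) hap
    have hble : v a ≤ v p0 := hmax a ⟨hba.le, by linarith [hp0i.2]⟩
    linarith
  -- final assembly
  intro p hp
  by_contra hcon
  push_neg at hcon
  have hveq : v p = c / r := le_antisymm (hstage1 p ⟨hp.1.le, hp.2.le⟩) hcon
  have hmaxp : ∀ x ∈ Icc b1 1, v x ≤ v p := fun x hx => by rw [hveq]; exact hstage1 x hx
  by_cases hpb : p ≤ b2
  · exact hleft p hp.1 hpb hmaxp hveq
  · push_neg at hpb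
    have hv'0 : v' p = 0 := by
      have hloc : IsLocalMax v p :=
        Filter.eventually_of_mem (Icc_mem_nhds hp.1 hp.2) hmaxp
      exact hloc.hasDerivAt_eq_zero (hd1 p hp)
    have h1p : (0:ℝ) < 1 - p := by linarith [hp.2]
    set G := 2*r/(l^2*(1-p)^2) with hGdef
    have hG : 0 < G := div_pos (by linarith) (mul_pos (pow_pos hl 2) (pow_pos h1p 2))
    -- energy/Gronwall argument: v = c/r on (b2, p)
    have hweq : ∀ a ∈ Ioo b2 p, v a = c / r := by
      intro a ha
      have ha0 : (0:ℝ) < a := by linarith [ha.1]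
      have hb1a : b1 < a := by linarith [ha.1]
      have hsub3 : Icc a p ⊆ Ioo b1 1 :=
        fun x hx => ⟨lt_of_lt_of_le hb1a hx.1, lt_of_le_of_lt hx.2 hp.2⟩
      have hsub4 : Icc a p ⊆ Icc b1 1 :=
        fun x hx => ⟨le_trans hb1a.le hx.1, le_trans hx.2 hp.2.le⟩
      have hioo : ∀ x ∈ Ioo a p, x ∈ Ioo b2 1 :=
        fun x hx => ⟨lt_trans ha.1 hx.1, lt_trans hx.2 hp.2⟩
      have hud : ∀ x ∈ Ioo a p, HasDerivAt (fun y => y^2*v' y)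
          (2*(r*v x - c)/(l^2*(1-x)^2)) x :=
        fun x hx => hud2 x (hioo x hx)
      have hwnn : ∀ x ∈ Icc a p, 0 ≤ c/r - v x :=
        fun x hx => sub_nonneg.2 (hstage1 x (hsub4 hx))
      have hcle : ∀ x ∈ Icc a p, 0 ≤ c - r * v x := by
        intro x hx
        have := (le_div_iff₀ hr).1 (hstage1 x (hsub4 hx))
        linarith
      have hunp : ∀ x ∈ Ioo a p, 2*(r*v x - c)/(l^2*(1-x)^2) ≤ 0 := by
        intro x hx
        have h1x : (0:ℝ) < 1 - x := by linarith [hx.2]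
        have := hcle x (Ioo_subset_Icc_self hx)
        exact div_nonpos_of_nonpos_of_nonneg (by linarith)
          (le_of_lt (mul_pos (pow_pos hl 2) (pow_pos h1x 2)))
      have hua : AntitoneOn (fun y => y^2*v' y) (Icc a p) :=
        aOn (hucont.mono hsub3) hud hunp
      have hunn : ∀ x ∈ Icc a p, 0 ≤ x^2 * v' x := by
        intro x hx
        have h0 : p^2 * v' p ≤ x^2 * v' x := hua hx (right_mem_Icc.2 ha.2.le) hx.2
        rw [hv'0, mul_zero] at h0
        exact h0
      have hv'nn : ∀ x ∈ Icc a p, 0 ≤ v' x := by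
        intro x hx
        have h0 := hunn x hx
        have hx0 : (0:ℝ) < x := lt_of_lt_of_le ha0 hx.1
        nlinarith [pow_pos hx0 2]
      -- the energy function F = u^2 - G w^2 is monotone on [a, p]
      have hFd : ∀ x ∈ Ioo a p, HasDerivAt (fun y => (y^2*v' y)^2 - G*(c/r - v y)^2)
          (2*(x^2*v' x)*(2*(r*v x - c)/(l^2*(1-x)^2)) + G*(2*(c/r - v x)*(v' x))) x := by
        intro x hx
        have h := ((hud x hx).pow 2).sub
          ((((hasDerivAt_const x (c/r)).sub (hd1 x (hsub3 (Ioo_subset_Icc_self hx)))).pow 2).const_mul G)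
        refine h.congr_deriv ?_
        push_cast [Pi.sub_apply]
        ring
      have hF'nn : ∀ x ∈ Ioo a p,
          0 ≤ 2*(x^2*v' x)*(2*(r*v x - c)/(l^2*(1-x)^2)) + G*(2*(c/r - v x)*(v' x)) := by
        intro x hx
        have hxI := Ioo_subset_Icc_self hx
        have h1x : (0:ℝ) < 1 - x := by linarith [hx.2]
        have hx0 : (0:ℝ) < x := lt_of_lt_of_le ha0 hxI.1
        have hv' := hv'nn x hxI
        have hcx := hcle x hxI
        have hEq : 2*(x^2*v' x)*(2*(r*v x - c)/(l^2*(1-x)^2)) + G*(2*(c/r - v x)*(v' x))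
            = 4*(v' x)*(c - r*v x)*((l^2*(1-x)^2) - x^2*(l^2*(1-p)^2))
              /((l^2*(1-x)^2)*(l^2*(1-p)^2)) := by
          rw [hGdef]
          field_simp
          ring
        rw [hEq]
        apply div_nonneg
        · apply mul_nonneg (mul_nonneg (mul_nonneg (by norm_num) hv') hcx)
          have hx21 : x^2 ≤ 1 := by nlinarith
          have h12 : (1-p)^2 ≤ (1-x)^2 := by nlinarith [hx.2]
          have t1 : 0 ≤ (1 - x^2) * (l^2*(1-p)^2) :=
            mul_nonneg (by linarith) (by positivity)
          have t2 : 0 ≤ ((1-x)^2 - (1-p)^2) * l^2 :=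
            mul_nonneg (by linarith) (by positivity)
          nlinarith [t1, t2]
        · positivity
      have hFcont : ContinuousOn (fun y => (y^2*v' y)^2 - G*(c/r - v y)^2) (Icc a p) := by
        apply ContinuousOn.sub
        · exact (hucont.mono hsub3).pow 2
        · exact continuousOn_const.mul ((continuousOn_const.sub (hvc.mono hsub4)).pow 2)
      have hFmono : MonotoneOn (fun y => (y^2*v' y)^2 - G*(c/r - v y)^2) (Icc a p) :=
        mOn hFcont hFd hF'nn
      have hFle : ∀ x ∈ Icc a p, (x^2*v' x)^2 - G*(c/r - v x)^2 ≤ 0 := by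
        intro x hx
        have h0 : (x^2*v' x)^2 - G*(c/r - v x)^2 ≤ (p^2*v' p)^2 - G*(c/r - v p)^2 :=
          hFmono hx (right_mem_Icc.2 ha.2.le) hx.2
        rw [hv'0, hveq, mul_zero, sub_self] at h0
        simpa using h0
      -- u ≤ √G · w on [a, p]
      have hub : ∀ x ∈ Icc a p, x^2 * v' x ≤ Real.sqrt G * (c/r - v x) := by
        intro x hx
        have h1 := hFle x hx
        have h2 := hunn x hx
        have h3 := hwnn x hx
        calc x^2*v' x = Real.sqrt ((x^2*v' x)^2) := (Real.sqrt_sq h2).symm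
          _ ≤ Real.sqrt (G*(c/r - v x)^2) := Real.sqrt_le_sqrt (by linarith)
          _ = Real.sqrt G * (c/r - v x) := by rw [Real.sqrt_mul hG.le, Real.sqrt_sq h3]
      set H := Real.sqrt G / a^2 with hHdef
      have hHnn : 0 ≤ H := div_nonneg (Real.sqrt_nonneg G) (by positivity)
      have hφd : ∀ x ∈ Ioo a p, HasDerivAt (fun y => (c/r - v y) * Real.exp (H*y))
          ((0 - v' x) * Real.exp (H*x) + (c/r - v x) * (Real.exp (H*x) * H)) x := by
        intro x hx
        have hlin : HasDerivAt (fun y : ℝ => H*y) H x := by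
          simpa using (hasDerivAt_id x).const_mul H
        exact ((hasDerivAt_const x (c/r)).sub (hd1 x (hsub3 (Ioo_subset_Icc_self hx)))).mul
          ((Real.hasDerivAt_exp (H*x)).comp x hlin)
      have hφ'nn : ∀ x ∈ Ioo a p,
          0 ≤ (0 - v' x) * Real.exp (H*x) + (c/r - v x) * (Real.exp (H*x) * H) := by
        intro x hx
        have hxI := Ioo_subset_Icc_self hx
        have hu1 := hub x hxI
        have hw1 := hwnn x hxI
        have hexp : 0 < Real.exp (H*x) := Real.exp_pos _
        have hv' := hv'nn x hxI
        have hvx' : v' x ≤ H * (c/r - v x) := by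
          have ha2 : (0:ℝ) < a^2 := by positivity
          have hax : a ≤ x := hxI.1
          have step : v' x * a^2 ≤ Real.sqrt G * (c/r - v x) := by
            have hxx : a^2 ≤ x^2 := by nlinarith
            have h9 := mul_le_mul_of_nonneg_left hxx hv'
            nlinarith [h9]
          rw [hHdef, div_mul_eq_mul_div, le_div_iff₀ ha2]
          linarith [step]
        nlinarith [mul_le_mul_of_nonneg_right hvx' hexp.le]
      have hφcont : ContinuousOn (fun y => (c/r - v y) * Real.exp (H*y)) (Icc a p) :=
        (continuousOn_const.sub (hvc.mono hsub4)).mul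
          ((Real.continuous_exp.comp (continuous_const.mul continuous_id)).continuousOn)
      have hφmono : MonotoneOn (fun y => (c/r - v y) * Real.exp (H*y)) (Icc a p) :=
        mOn hφcont hφd hφ'nn
      have h5 : (c/r - v a) * Real.exp (H*a) ≤ (c/r - v p) * Real.exp (H*p) :=
        hφmono (left_mem_Icc.2 ha.2.le) (right_mem_Icc.2 ha.2.le) ha.2.le
      rw [hveq, sub_self, zero_mul] at h5
      have hwa := hwnn a (left_mem_Icc.2 ha.2.le)
      have hexpa : 0 < Real.exp (H*a) := Real.exp_pos _
      have h6 : c/r - v a ≤ 0 := by nlinarith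
      linarith
    -- hence v b2 = c/r by continuity, and the leftward argument at b2 concludes
    have hvb2 : v b2 = c / r := by
      have hcb2 : ContinuousAt v b2 := hcA b2 ⟨hb12, hb2⟩
      have ht1 : Filter.Tendsto v (nhdsWithin b2 (Ioi b2)) (nhds (v b2)) :=
        hcb2.tendsto.mono_left nhdsWithin_le_nhds
      have heq : (fun _ : ℝ => c/r) =ᶠ[nhdsWithin b2 (Ioi b2)] v := by
        filter_upwards [Ioo_mem_nhdsGT_of_mem ⟨le_refl b2, hpb⟩] with x hx
        exact (hweq x hx).symm
      have ht2 : Filter.Tendsto v (nhdsWithin b2 (Ioi b2)) (nhds (c/r)) :=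
        Filter.Tendsto.congr' heq tendsto_const_nhds
      exact tendsto_nhds_unique ht1 ht2
    have hmaxb2 : ∀ x ∈ Icc b1 1, v x ≤ v b2 := fun x hx => by
      rw [hvb2]; exact hstage1 x hx
    exact hleft b2 hb12 le_rfl hmaxb2 hvb2
end

section
/- Under the same ODE system and boundary conditions for v as in the controller value problem (with c − (λ̄−λ̲)² ≥ 0), and assuming additionally the smooth-pasting condition v'(b₂*) = (λ̄−λ̲)/(b₂*(1−b₂*)λ̲) and the jump value v(b₂*) = c/r − (λ̄−λ̲)/(α₁(λ̲)λ̲): the right derivative v'(b₁*+) is strictly positive. -/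
/-!
A minimum principle gives `v ≥ 0` on `[b₁, 1]`: at a negative interior minimum `v' = 0`, the
minimum is not at `b₂` because `v'(b₂) > 0` by smooth pasting, and the ODE then forces `v'' < 0`.

Suppose `v'(b₁+) ≤ 0`. If `v'(b₁+) < 0`, or if `v'(b₁+) = 0` and `c > (λ̄ - λ̲)²` (then the ODE
makes `v''` negative near `b₁`), `v` decreases from `v(b₁) = 0` and becomes negative. If
`c = (λ̄ - λ̲)²`, the ODE on `(b₁, b₂)` is homogeneous; for `w = p² v'` it reads
`(λ̄²(1-p)²/2) w' = r v ≥ 0`, so `w ≥ 0`, and Grönwall's inequality for `v + w` (which vanishes at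
`b₁+`) gives `v' ≡ 0` on `(b₁, b₂)`, contradicting `v'(b₂) > 0` by continuity of `v'`.
-/

open Set Filter Topology

noncomputable def alpha1 (r lam : ℝ) : ℝ := 1/2 + Real.sqrt (8*r/lam^2 + 1) / 2

theorem IsLocalMin.nonneg_of_hasDerivAt_deriv {f : ℝ → ℝ} {x s : ℝ} (h : IsLocalMin f x)
    (hc : ContinuousAt f x) (hs : HasDerivAt (deriv f) s x) : 0 ≤ s := by
  by_contra! hneg
  have hmax : IsLocalMax f x :=
    isLocalMax_of_deriv_deriv_neg (hs.deriv ▸ hneg) h.deriv_eq_zero hc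
  have hconst : f =ᶠ[𝓝 x] fun _ => f x := (h.and hmax).mono fun y hy => le_antisymm hy.2 hy.1
  have hderiv : deriv f =ᶠ[𝓝 x] fun _ => 0 := hconst.deriv.trans (by simp)
  exact hneg.ne (hs.unique ((hasDerivAt_const x 0).congr_of_eventuallyEq hderiv))

theorem nonneg_of_critical_second_deriv_neg {v v' : ℝ → ℝ} {a b : ℝ}
    (hcont : ContinuousOn v (Icc a b)) (ha : 0 ≤ v a) (hb : 0 ≤ v b)
    (hd : ∀ p ∈ Ioo a b, HasDerivAt v (v' p) p)
    (hcrit : ∀ p ∈ Ioo a b, v p < 0 → v' p = 0 → ∃ s < 0, HasDerivAt v' s p) :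
    ∀ p ∈ Icc a b, 0 ≤ v p := by
  by_contra! ⟨q, hq, hvq⟩
  obtain ⟨p, hp, hmin⟩ := isCompact_Icc.exists_isMinOn ⟨q, hq⟩ hcont
  have hvp : v p < 0 := (hmin hq).trans_lt hvq
  have hp' : p ∈ Ioo a b :=
    ⟨hp.1.lt_of_ne (by rintro rfl; linarith), hp.2.lt_of_ne (by rintro rfl; linarith)⟩
  have hloc : IsLocalMin v p := hmin.isLocalMin (Icc_mem_nhds hp'.1 hp'.2)
  obtain ⟨s, hs, hds⟩ := hcrit p hp' hvp (hloc.hasDerivAt_eq_zero (hd p hp'))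
  have hderiv : deriv v =ᶠ[𝓝 p] v' :=
    eventually_of_mem (Ioo_mem_nhds hp'.1 hp'.2) fun y hy => (hd y hy).deriv
  exact hs.not_ge <|
    hloc.nonneg_of_hasDerivAt_deriv (hd p hp').continuousAt (hds.congr_of_eventuallyEq hderiv)

theorem AntitoneOn.le_of_tendsto_nhdsGT {f : ℝ → ℝ} {a b y : ℝ} (h : AntitoneOn f (Ioo a b))
    (hlim : Tendsto f (𝓝[>] a) (𝓝 y)) : ∀ x ∈ Ioo a b, f x ≤ y := fun _ hx =>
  ge_of_tendsto hlim <| mem_of_superset (Ioo_mem_nhdsGT hx.1) fun _ hz =>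
    h ⟨hz.1, hz.2.trans hx.2⟩ hx hz.2.le

theorem le_of_tendsto_nhdsGT_of_hasDerivAt_nonpos {f f' : ℝ → ℝ} {a b y : ℝ}
    (hd : ∀ x ∈ Ioo a b, HasDerivAt f (f' x) x) (hf' : ∀ x ∈ Ioo a b, f' x ≤ 0)
    (hlim : Tendsto f (𝓝[>] a) (𝓝 y)) : ∀ x ∈ Ioo a b, f x ≤ y := by
  refine AntitoneOn.le_of_tendsto_nhdsGT ?_ hlim
  refine antitoneOn_of_hasDerivWithinAt_nonpos (convex_Ioo a b)
    (fun x hx => (hd x hx).continuousAt.continuousWithinAt) ?_ (by rwa [interior_Ioo])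
  rw [interior_Ioo]
  exact fun x hx => (hd x hx).hasDerivWithinAt

theorem eventually_lt_of_tendsto_nhdsGT_of_hasDerivAt_neg {f f' : ℝ → ℝ} {a y : ℝ}
    (hd : ∀ᶠ x in 𝓝[>] a, HasDerivAt f (f' x) x) (hf' : ∀ᶠ x in 𝓝[>] a, f' x < 0)
    (hlim : Tendsto f (𝓝[>] a) (𝓝 y)) : ∀ᶠ x in 𝓝[>] a, f x < y := by
  obtain ⟨u, hau, hu⟩ := mem_nhdsGT_iff_exists_Ioo_subset.mp (hd.and hf')
  have hanti : StrictAntiOn f (Ioo a u) := by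
    refine strictAntiOn_of_hasDerivWithinAt_neg (f' := f') (convex_Ioo a u)
      (fun x hx => (hu hx).1.continuousAt.continuousWithinAt) ?_ ?_ <;> rw [interior_Ioo]
    · exact fun x hx => (hu hx).1.hasDerivWithinAt
    · exact fun x hx => (hu hx).2
  filter_upwards [Ioo_mem_nhdsGT hau] with x hx
  obtain ⟨z, haz, hzx⟩ := exists_between hx.1
  have hz : z ∈ Ioo a u := ⟨haz, hzx.trans hx.2⟩
  exact (hanti hz hx hzx).trans_le (hanti.antitoneOn.le_of_tendsto_nhdsGT hlim z hz)

theorem not_eventually_deriv_neg_of_nonneg {f f' : ℝ → ℝ} {a : ℝ}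
    (hd : ∀ᶠ x in 𝓝[>] a, HasDerivAt f (f' x) x) (hf : ∀ᶠ x in 𝓝[>] a, 0 ≤ f x)
    (hlim : Tendsto f (𝓝[>] a) (𝓝 0)) : ¬ ∀ᶠ x in 𝓝[>] a, f' x < 0 := fun hf' => by
  obtain ⟨x, hneg, hnonneg⟩ :=
    ((eventually_lt_of_tendsto_nhdsGT_of_hasDerivAt_neg hd hf' hlim).and hf).exists
  exact hneg.not_ge hnonneg

theorem nonpos_of_tendsto_nhdsGT_of_hasDerivAt_le_mul {f f' : ℝ → ℝ} {a b K : ℝ}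
    (hd : ∀ x ∈ Ioo a b, HasDerivAt f (f' x) x) (hf' : ∀ x ∈ Ioo a b, f' x ≤ K * f x)
    (hlim : Tendsto f (𝓝[>] a) (𝓝 0)) : ∀ x ∈ Ioo a b, f x ≤ 0 := by
  have hexp (x : ℝ) : HasDerivAt (fun x => Real.exp (-K * x)) (Real.exp (-K * x) * -K) x := by
    simpa using ((hasDerivAt_id x).const_mul (-K)).exp
  have hg := le_of_tendsto_nhdsGT_of_hasDerivAt_nonpos (f := fun x => f x * Real.exp (-K * x))
    (fun x hx => (hd x hx).mul (hexp x))
    (fun x hx => by nlinarith [hf' x hx, Real.exp_pos (-K * x)])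
    (by simpa using hlim.mul ((hexp a).continuousAt.tendsto.mono_left nhdsWithin_le_nhds))
  exact fun x hx => nonpos_of_mul_nonpos_left (hg x hx) (Real.exp_pos _)

section ControllerValue

variable {r c l L a b : ℝ} {v v' v'' : ℝ → ℝ}

theorem nonneg_of_controller_ode (hr : 0 < r) (hc : 0 ≤ c) (hcost : 0 ≤ c - (L - l)^2)
    (hcont : ContinuousOn v (Icc a 1)) (ha : v a = 0) (h1 : 0 ≤ v 1)
    (hd1 : ∀ p ∈ Ioo a 1, HasDerivAt v (v' p) p)
    (hd2 : ∀ p ∈ Ioo a b ∪ Ioo b 1, HasDerivAt v' (v'' p) p)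
    (hODE1 : ∀ p ∈ Ioo a b,
      L^2*p^2*(1-p)^2/2 * v'' p + L^2*(1-p)^2*p * v' p - r * v p + c - (L-l)^2 = 0)
    (hODE2 : ∀ p ∈ Ioo b 1,
      l^2*p^2*(1-p)^2/2 * v'' p + l^2*(1-p)^2*p * v' p - r * v p + c = 0)
    (hb : v' b ≠ 0) : ∀ p ∈ Icc a 1, 0 ≤ v p := by
  refine nonneg_of_critical_second_deriv_neg hcont ha.ge h1 hd1 fun p hp hvp hv'p => ?_
  have hpb : p ≠ b := by rintro rfl; exact hb hv'p
  have hp' : p ∈ Ioo a b ∪ Ioo b 1 := by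
    rcases hpb.lt_or_gt with h | h
    exacts [Or.inl ⟨hp.1, h⟩, Or.inr ⟨h, hp.2⟩]
  refine ⟨v'' p, ?_, hd2 p hp'⟩
  -- as `v' p = 0`, the ODE reads `A v'' = r v - k < 0` with leading coefficient `A ≥ 0`
  by_contra! hv''
  have hrv : r * v p < 0 := mul_neg_of_pos_of_neg hr hvp
  rcases hp' with hp' | hp'
  · have hode := hODE1 p hp'
    rw [hv'p, mul_zero] at hode
    nlinarith [mul_nonneg (by positivity : (0:ℝ) ≤ L^2*p^2*(1-p)^2/2) hv'']
  · have hode := hODE2 p hp'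
    rw [hv'p, mul_zero] at hode
    nlinarith [mul_nonneg (by positivity : (0:ℝ) ≤ l^2*p^2*(1-p)^2/2) hv'']

theorem eventually_deriv2_neg_of_controller_ode (hab : a < b) (hk : 0 < c - (L-l)^2)
    (hODE1 : ∀ p ∈ Ioo a b,
      L^2*p^2*(1-p)^2/2 * v'' p + L^2*(1-p)^2*p * v' p - r * v p + c - (L-l)^2 = 0)
    (hv : Tendsto v (𝓝[>] a) (𝓝 0)) (hv' : Tendsto v' (𝓝[>] a) (𝓝 0)) :
    ∀ᶠ p in 𝓝[>] a, v'' p < 0 := by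
  have hB : Tendsto (fun p : ℝ => L^2*(1-p)^2*p) (𝓝[>] a) (𝓝 (L^2*(1-a)^2*a)) :=
    (Continuous.tendsto (by fun_prop) a).mono_left nhdsWithin_le_nhds
  have hrest : Tendsto (fun p => L^2*(1-p)^2*p * v' p - r * v p) (𝓝[>] a) (𝓝 0) := by
    simpa using (hB.mul hv').sub (hv.const_mul r)
  filter_upwards [hrest.eventually (lt_mem_nhds (neg_neg_of_pos hk)), Ioo_mem_nhdsGT hab]
    with p hp hpab
  by_contra! hv''
  nlinarith [hODE1 p hpab, mul_nonneg (by positivity : (0:ℝ) ≤ L^2*p^2*(1-p)^2/2) hv'']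

theorem deriv_eq_zero_of_homogeneous_ode (ha : 0 < a) (hb : b < 1) (hL : L ≠ 0) (hr : 0 ≤ r)
    (hd1 : ∀ p ∈ Ioo a b, HasDerivAt v (v' p) p) (hd2 : ∀ p ∈ Ioo a b, HasDerivAt v' (v'' p) p)
    (hODE : ∀ p ∈ Ioo a b, L^2*p^2*(1-p)^2/2 * v'' p + L^2*(1-p)^2*p * v' p - r * v p = 0)
    (hv : ∀ p ∈ Ioo a b, 0 ≤ v p) (hvlim : Tendsto v (𝓝[>] a) (𝓝 0))
    (hv'lim : Tendsto v' (𝓝[>] a) (𝓝 0)) : ∀ p ∈ Ioo a b, v' p = 0 := by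
  set w : ℝ → ℝ := fun q => q^2 * v' q
  set w' : ℝ → ℝ := fun q => 2*q*v' q + q^2*v'' q
  have hw (p) (hp : p ∈ Ioo a b) : HasDerivAt w (w' p) p :=
    ((hasDerivAt_pow 2 p).mul (hd2 p hp)).congr_deriv (by simp only [w']; ring)
  have hCpos (p) (hp : p ∈ Ioo a b) : 0 < L^2*(1-p)^2/2 := by
    have : 0 < 1 - p := by linarith [hp.2]
    positivity
  have hwode (p) (hp : p ∈ Ioo a b) : L^2*(1-p)^2/2 * w' p = r * v p := by
    linear_combination hODE p hp
  have hwlim : Tendsto w (𝓝[>] a) (𝓝 0) := by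
    simpa using (((continuous_pow 2).tendsto a).mono_left nhdsWithin_le_nhds).mul hv'lim
  have hw'_nonneg (p) (hp : p ∈ Ioo a b) : 0 ≤ w' p :=
    nonneg_of_mul_nonneg_right ((hwode p hp).symm ▸ mul_nonneg hr (hv p hp)) (hCpos p hp)
  have hw_nonneg (p) (hp : p ∈ Ioo a b) : 0 ≤ w p := by
    have := le_of_tendsto_nhdsGT_of_hasDerivAt_nonpos (f := fun q => -w q)
      (fun p hp => (hw p hp).neg) (fun p hp => neg_nonpos.2 (hw'_nonneg p hp))
      (by simpa using hwlim.neg) p hp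
    simpa using this
  set M := 2*r/(L^2*(1-b)^2)
  have hM : 0 ≤ M := by positivity
  have hv'_le (p) (hp : p ∈ Ioo a b) : v' p ≤ 1/a^2 * w p := by
    have hv'_nonneg : 0 ≤ v' p :=
      nonneg_of_mul_nonneg_right (hw_nonneg p hp) (by have := ha.trans hp.1; positivity)
    have hap : a^2 ≤ p^2 := pow_le_pow_left₀ ha.le hp.1.le 2
    rw [div_mul_eq_mul_div, one_mul, le_div_iff₀ (by positivity)]
    nlinarith
  have hw'_le (p) (hp : p ∈ Ioo a b) : w' p ≤ M * v p := by
    have hbp : (1-b)^2 ≤ (1-p)^2 := pow_le_pow_left₀ (by linarith) (by linarith [hp.2]) 2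
    have hL2 : 0 < L^2 * (1-b)^2 := by
      have : 0 < 1 - b := by linarith
      positivity
    rw [div_mul_eq_mul_div, le_div_iff₀ hL2]
    nlinarith [hwode p hp,
      mul_le_mul_of_nonneg_left hbp (mul_nonneg (sq_nonneg L) (hw'_nonneg p hp))]
  have hG := nonpos_of_tendsto_nhdsGT_of_hasDerivAt_le_mul
    (f := fun q => v q + w q) (K := 1/a^2 + M)
    (fun p hp => (hd1 p hp).add (hw p hp))
    (fun p hp => by
      nlinarith [hv'_le p hp, hw'_le p hp, mul_nonneg hM (hw_nonneg p hp),
        mul_nonneg (by positivity : (0:ℝ) ≤ 1/a^2) (hv p hp)])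
    (by simpa using hvlim.add hwlim)
  intro p hp
  have : w p = 0 := le_antisymm (by linarith [hG p hp, hv p hp]) (hw_nonneg p hp)
  simpa [w, (ha.trans hp.1).ne'] using this

end ControllerValue

theorem stmt7_general (r c l L b1 b2 vb1 : ℝ) (v v' v'' : ℝ → ℝ)
    (hr : 0 < r) (hc : 0 < c) (hl : 0 < l) (hlL : l < L)
    (hcost : 0 ≤ c - (L - l)^2)
    (hb1 : 0 < b1) (hb12 : b1 < b2) (hb2 : b2 < 1)
    (hcont : ContinuousOn v (Set.Ioc 0 1))
    (hd1 : ∀ p ∈ Set.Ioo b1 1, HasDerivAt v (v' p) p)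
    (hC1 : ContinuousOn v' (Set.Ioo b1 1))
    (hd2 : ∀ p ∈ Set.Ioo b1 b2 ∪ Set.Ioo b2 1, HasDerivAt v' (v'' p) p)
    (hODE1 : ∀ p ∈ Set.Ioo b1 b2,
      L^2*p^2*(1-p)^2/2 * v'' p + L^2*(1-p)^2*p * v' p - r * v p + c - (L-l)^2 = 0)
    (hODE2 : ∀ p ∈ Set.Ioo b2 1,
      l^2*p^2*(1-p)^2/2 * v'' p + l^2*(1-p)^2*p * v' p - r * v p + c = 0)
    (hvb1 : v b1 = 0) (hv1 : v 1 = c/r)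
    (hsp : v' b2 = (L - l)/(b2*(1-b2)*l))
    (hlim : Filter.Tendsto v' (nhdsWithin b1 (Set.Ioi b1)) (nhds vb1)) :
    0 < vb1 := by
  have hb11 : b1 < 1 := hb12.trans hb2
  have hvb2 : 0 < v' b2 := by
    have := hb1.trans hb12
    have := sub_pos.2 hb2
    rw [hsp]; exact div_pos (sub_pos.2 hlL) (by positivity)
  have hv_nonneg : ∀ p ∈ Icc b1 1, 0 ≤ v p :=
    nonneg_of_controller_ode hr hc.le hcost (hcont.mono fun p hp => ⟨hb1.trans_le hp.1, hp.2⟩)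
      hvb1 (hv1 ▸ (div_pos hc hr).le) hd1 hd2 hODE1 hODE2 hvb2.ne'
  have hv_lim : Tendsto v (𝓝[>] b1) (𝓝 0) :=
    hvb1 ▸ (hcont b1 ⟨hb1, hb11.le⟩).mono_of_mem_nhdsWithin
      (mem_of_superset (Ioc_mem_nhdsGT hb11) fun p hp => ⟨hb1.trans hp.1, hp.2⟩)
  have hIoo : Ioo b1 b2 ∈ 𝓝[>] b1 := Ioo_mem_nhdsGT hb12
  have hv'_not_eventually_neg : ¬ ∀ᶠ p in 𝓝[>] b1, v' p < 0 :=
    not_eventually_deriv_neg_of_nonneg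
      (mem_of_superset hIoo fun p hp => hd1 p ⟨hp.1, hp.2.trans hb2⟩)
      (mem_of_superset hIoo fun p hp => hv_nonneg p ⟨hp.1.le, (hp.2.trans hb2).le⟩) hv_lim
  by_contra! hvb1_nonpos
  obtain hneg | rfl := hvb1_nonpos.lt_or_eq
  · exact hv'_not_eventually_neg (hlim.eventually (gt_mem_nhds hneg))
  obtain hk | hk := hcost.lt_or_eq
  · exact hv'_not_eventually_neg <| eventually_lt_of_tendsto_nhdsGT_of_hasDerivAt_neg
      (mem_of_superset hIoo fun p hp => hd2 p (Or.inl hp))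
      (eventually_deriv2_neg_of_controller_ode hb12 hk hODE1 hv_lim hlim) hlim
  have hv'_zero := deriv_eq_zero_of_homogeneous_ode hb1 hb2 (hl.trans hlL).ne' hr.le
    (fun p hp => hd1 p ⟨hp.1, hp.2.trans hb2⟩) (fun p hp => hd2 p (Or.inl hp))
    (fun p hp => by linear_combination hODE1 p hp + hk)
    (fun p hp => hv_nonneg p ⟨hp.1.le, (hp.2.trans hb2).le⟩) hv_lim hlim
  have hv'_left : Tendsto v' (𝓝[<] b2) (𝓝 (v' b2)) :=
    ((hC1.continuousAt (Ioo_mem_nhds hb12 hb2)).tendsto).mono_left nhdsWithin_le_nhds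
  have : v' b2 = 0 := tendsto_nhds_unique hv'_left <| tendsto_const_nhds.congr' <|
    mem_of_superset (Ioo_mem_nhdsLT hb12) fun p hp => (hv'_zero p hp).symm
  exact hvb2.ne' this

theorem stmt7 (r c l L b1 b2 vb1 : ℝ) (v v' v'' : ℝ → ℝ)
    (hr : 0 < r) (hc : 0 < c) (hl : 0 < l) (hlL : l < L)
    (hcost : 0 ≤ c - (L - l)^2)
    (hb1 : 0 < b1) (hb12 : b1 < b2) (hb2 : b2 < 1)
    (hcont : ContinuousOn v (Set.Ioc 0 1))
    (hd1 : ∀ p ∈ Set.Ioo b1 1, HasDerivAt v (v' p) p)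
    (hC1 : ContinuousOn v' (Set.Ioo b1 1))
    (hd2 : ∀ p ∈ Set.Ioo b1 b2 ∪ Set.Ioo b2 1, HasDerivAt v' (v'' p) p)
    (hODE1 : ∀ p ∈ Set.Ioo b1 b2,
      L^2*p^2*(1-p)^2/2 * v'' p + L^2*(1-p)^2*p * v' p - r * v p + c - (L-l)^2 = 0)
    (hODE2 : ∀ p ∈ Set.Ioo b2 1,
      l^2*p^2*(1-p)^2/2 * v'' p + l^2*(1-p)^2*p * v' p - r * v p + c = 0)
    (hvb1 : v b1 = 0) (hv1 : v 1 = c/r)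
    (hsp : v' b2 = (L - l)/(b2*(1-b2)*l))
    (hjump : v b2 = c/r - (L - l)/(alpha1 r l * l))
    (hlim : Filter.Tendsto v' (nhdsWithin b1 (Set.Ioi b1)) (nhds vb1)) :
    0 < vb1 :=
  stmt7_general r c l L b1 b2 vb1 v v' v'' hr hc hl hlL hcost hb1 hb12 hb2 hcont hd1 hC1 hd2 hODE1
    hODE2 hvb1 hv1 hsp hlim
end

section
/- Under the hypotheses on v as in the controller value problem (including c ≥ (λ̄−λ̲)², v(b₁*) = 0, v(1) = c/r, v ∈ C¹(b₁*,1), and v'(b₁*+) > 0, v'(b₂*) > 0): v'(p) > 0 for all p ∈ (b₁*, 1), i.e., the controller's value function is strictly increasing on (b₁*, 1). -/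
set_option maxHeartbeats 1000000

open Set Filter

lemma deriv_nonpos_of_left_ge {f : ℝ → ℝ} {f' a x : ℝ} (hx : HasDerivAt f f' x)
    (ha : a < x) (h : ∀ p ∈ Set.Ioo a x, f x ≤ f p) : f' ≤ 0 := by
  have hT : Filter.Tendsto (slope f x) (nhdsWithin x (Set.Iio x)) (nhds f') :=
    (hasDerivAt_iff_tendsto_slope.1 hx).mono_left
      (nhdsWithin_mono x fun p hp => ne_of_lt hp)
  refine le_of_tendsto hT ?_
  filter_upwards [self_mem_nhdsWithin,
    mem_nhdsWithin_of_mem_nhds (isOpen_Ioi.mem_nhds ha)] with p hp hpa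
  rw [slope_def_field]
  apply div_nonpos_of_nonneg_of_nonpos
  · exact sub_nonneg.2 (h p ⟨hpa, hp⟩)
  · linarith [show p < x from hp]

lemma deriv_nonneg_of_left_le {f : ℝ → ℝ} {f' a x : ℝ} (hx : HasDerivAt f f' x)
    (ha : a < x) (h : ∀ p ∈ Set.Ioo a x, f p ≤ f x) : 0 ≤ f' := by
  have := deriv_nonpos_of_left_ge (f := fun y => -f y) (f' := -f') hx.neg ha
    (fun p hp => neg_le_neg (h p hp))
  linarith

lemma neg_right_of_deriv_neg {f : ℝ → ℝ} {f' x : ℝ} (hx : HasDerivAt f f' x)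
    (h0 : f x = 0) (hneg : f' < 0) : ∃ u, x < u ∧ ∀ p ∈ Set.Ioo x u, f p < 0 := by
  have hT : Filter.Tendsto (slope f x) (nhdsWithin x (Set.Ioi x)) (nhds f') :=
    (hasDerivAt_iff_tendsto_slope.1 hx).mono_left
      (nhdsWithin_mono x fun p hp => ne_of_gt hp)
  have hev : ∀ᶠ p in nhdsWithin x (Set.Ioi x), slope f x p < 0 :=
    hT.eventually (eventually_lt_nhds hneg)
  obtain ⟨u, hu, hsub⟩ := mem_nhdsGT_iff_exists_Ioo_subset.1 hev
  refine ⟨u, hu, fun p hp => ?_⟩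
  have hs := hsub hp
  rw [Set.mem_setOf_eq, slope_def_field, h0, sub_zero] at hs
  by_contra hcon
  push_neg at hcon
  have : 0 ≤ f p / (p - x) := div_nonneg hcon (by linarith [hp.1])
  linarith

lemma first_zero {f : ℝ → ℝ} {a b : ℝ} (hab : a < b)
    (hcont : ∀ x ∈ Set.Ioo a b, ContinuousAt f x)
    (p0 : ℝ) (hp0 : p0 ∈ Set.Ioo a b) (hp0f : f p0 ≤ 0)
    (u : ℝ) (hu : a < u) (hupos : ∀ p ∈ Set.Ioo a u, 0 < f p) :
    ∃ q ∈ Set.Ioo a b, f q = 0 ∧ ∀ p ∈ Set.Ioo a q, 0 < f p := by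
  set S : Set ℝ := {p | p ∈ Set.Ioo a b ∧ f p ≤ 0} with hS_def
  have hS0 : p0 ∈ S := ⟨hp0, hp0f⟩
  have hbdd : BddBelow S := ⟨a, fun s hs => hs.1.1.le⟩
  set q := sInf S with hq_def
  have hlbu : ∀ s ∈ S, u ≤ s := by
    intro s hs
    by_contra hcon
    push_neg at hcon
    exact absurd (hupos s ⟨hs.1.1, hcon⟩) (not_lt.2 hs.2)
  have hqa : a < q := lt_of_lt_of_le hu (le_csInf ⟨p0, hS0⟩ hlbu)
  have hqp0 : q ≤ p0 := csInf_le hbdd hS0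
  have hqb : q < b := lt_of_le_of_lt hqp0 hp0.2
  have hqmem : q ∈ Set.Ioo a b := ⟨hqa, hqb⟩
  have hqpos : ∀ p ∈ Set.Ioo a q, 0 < f p := by
    intro p hp
    by_contra hcon
    push_neg at hcon
    have : p ∈ S := ⟨⟨hp.1, lt_trans hp.2 hqb⟩, hcon⟩
    exact absurd (csInf_le hbdd this) (not_le.2 hp.2)
  have hfq_le : f q ≤ 0 := by
    by_contra hcon
    push_neg at hcon
    have hev : ∀ᶠ y in nhds q, 0 < f y := (hcont q hqmem).eventually (eventually_gt_nhds hcon)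
    obtain ⟨ε, hε, hball⟩ := Metric.eventually_nhds_iff.1 hev
    have : q + ε ≤ q := by
      apply le_csInf ⟨p0, hS0⟩
      intro s hs
      by_contra hcon2
      push_neg at hcon2
      have hqs : q ≤ s := csInf_le hbdd hs
      have : dist s q < ε := by rw [Real.dist_eq, abs_lt]; constructor <;> linarith
      exact absurd (hball this) (not_lt.2 hs.2)
    linarith
  have hfq_ge : 0 ≤ f q := by
    have hT : Filter.Tendsto f (nhdsWithin q (Set.Iio q)) (nhds (f q)) :=
      ((hcont q hqmem).tendsto).mono_left nhdsWithin_le_nhds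
    refine ge_of_tendsto hT ?_
    filter_upwards [self_mem_nhdsWithin,
      mem_nhdsWithin_of_mem_nhds (isOpen_Ioi.mem_nhds hqa)] with p hp hpa
    exact (hqpos p ⟨hpa, hp⟩).le
  exact ⟨q, hqmem, le_antisymm hfq_le hfq_ge, hqpos⟩

lemma caseNeg_aux (κ r ceff q s : ℝ) (v v' v'' : ℝ → ℝ)
    (hκ : 0 < κ) (hr : 0 < r) (hq01 : 0 < q) (hqs : q < s) (hs1 : s < 1)
    (hd1 : ∀ p ∈ Set.Icc q s, HasDerivAt v (v' p) p)
    (hd2s : HasDerivAt v' (v'' s) s)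
    (hODEq : κ^2*q^2*(1-q)^2/2 * v'' q + κ^2*(1-q)^2*q * v' q - r * v q + ceff = 0)
    (hODEs : κ^2*s^2*(1-s)^2/2 * v'' s + κ^2*(1-s)^2*s * v' s - r * v s + ceff = 0)
    (hcv : ContinuousOn v (Set.Icc q s))
    (hq0 : v' q = 0) (hs0 : v' s = 0) (hv''q : v'' q < 0)
    (hmid : ∀ p ∈ Set.Ioo q s, v' p < 0) : False := by
  have hv''s : 0 ≤ v'' s := deriv_nonneg_of_left_le hd2s hqs
    (fun p hp => by rw [hs0]; exact (hmid p hp).le)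
  have hanti : StrictAntiOn v (Set.Icc q s) := by
    apply strictAntiOn_of_deriv_neg (convex_Icc q s) hcv
    rw [interior_Icc]
    intro p hp
    rw [(hd1 p (Set.Ioo_subset_Icc_self hp)).deriv]
    exact hmid p hp
  have hvs : v s < v q := hanti (Set.left_mem_Icc.2 hqs.le) (Set.right_mem_Icc.2 hqs.le) hqs
  have h1 : 0 < κ^2*q^2*(1-q)^2/2 := by
    have h1q : 0 < 1 - q := by linarith
    positivity
  have h2 : 0 < κ^2*s^2*(1-s)^2/2 := by
    have h1s : 0 < 1 - s := by linarith
    have hs0' : 0 < s := by linarith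
    positivity
  have e1 : κ^2*q^2*(1-q)^2/2 * v'' q < 0 := mul_neg_of_pos_of_neg h1 hv''q
  have e2 : 0 ≤ κ^2*s^2*(1-s)^2/2 * v'' s := mul_nonneg h2.le hv''s
  have e3 : r * v s < r * v q := mul_lt_mul_of_pos_left hvs hr
  rw [hq0] at hODEq
  rw [hs0] at hODEs
  linarith [e1, e2, e3, hODEq, hODEs]

lemma gronwall_aux (κ r ceff a q : ℝ) (v v' v'' : ℝ → ℝ)
    (hκ : 0 < κ) (hr : 0 < r) (ha : 0 < a) (haq : a < q) (hq1 : q < 1)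
    (hd1 : ∀ p ∈ Set.Icc a q, HasDerivAt v (v' p) p)
    (hd2 : ∀ p ∈ Set.Icc a q, HasDerivAt v' (v'' p) p)
    (hODE : ∀ p ∈ Set.Icc a q,
      κ^2*p^2*(1-p)^2/2 * v'' p + κ^2*(1-p)^2*p * v' p - r * v p + ceff = 0)
    (hv' : ∀ p ∈ Set.Icc a q, 0 ≤ v' p)
    (hv'a : 0 < v' a)
    (huq : ∀ p ∈ Set.Icc a q, r * v p ≤ ceff)
    (hvq : r * v q = ceff) (hv'q : v' q = 0) : False := by
  have h1q : 0 < 1 - q := by linarith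
  set k : ℝ := κ^2*a^2*(1-q)^2/2 with hk_def
  have hk : 0 < k := by rw [hk_def]; positivity
  set C : ℝ := (1 + r*k + κ^2)/k with hC_def
  have hCk : C * k = 1 + r*k + κ^2 := by
    rw [hC_def]; field_simp
  have hC : 0 < C := by
    rw [hC_def]
    apply div_pos _ hk
    nlinarith [pow_pos hκ 2, mul_pos hr hk]
  set M : ℝ → ℝ := fun p => (ceff - r * v p) + v' p with hM_def
  have hMd : ∀ p ∈ Set.Icc a q, HasDerivAt M (-(r * v' p) + v'' p) p := fun p hp =>
    (((hd1 p hp).const_mul r).const_sub ceff).add (hd2 p hp)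
  set g : ℝ → ℝ := fun p => M p * Real.exp (C * p) with hg_def
  have hgd : ∀ p ∈ Set.Icc a q,
      HasDerivAt g ((-(r * v' p) + v'' p) * Real.exp (C * p) + M p * (Real.exp (C * p) * C)) p := by
    intro p hp
    have he : HasDerivAt (fun x => Real.exp (C * x)) (Real.exp (C * p) * C) p := by
      simpa using ((hasDerivAt_id p).const_mul C).exp
    exact (hMd p hp).mul he
  have key : ∀ p ∈ Set.Icc a q,
      0 ≤ (-(r * v' p) + v'' p) * Real.exp (C * p) + M p * (Real.exp (C * p) * C) := by
    intro p hp
    obtain ⟨hap, hpq⟩ := hp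
    have hp0 : 0 < p := lt_of_lt_of_le ha hap
    have hp1 : 0 < 1 - p := by linarith
    set K1 : ℝ := κ^2*p^2*(1-p)^2/2 with hK1_def
    set K2 : ℝ := κ^2*(1-p)^2*p with hK2_def
    have hK1 : k ≤ K1 := by
      have h1 : a^2 ≤ p^2 := by nlinarith
      have h2 : (1-q)^2 ≤ (1-p)^2 := by nlinarith
      have h3 : a^2 * (1-q)^2 ≤ p^2 * (1-p)^2 :=
        mul_le_mul h1 h2 (sq_nonneg _) (sq_nonneg _)
      rw [hk_def, hK1_def]
      nlinarith [pow_pos hκ 2]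
    have hK1pos : 0 < K1 := lt_of_lt_of_le hk hK1
    have hK2pos : 0 ≤ K2 := by
      rw [hK2_def]
      exact mul_nonneg (mul_nonneg (sq_nonneg κ) (sq_nonneg _)) hp0.le
    have hK2 : K2 ≤ κ^2 := by
      have ha2 : (1-p)^2 * p ≤ 1 := by nlinarith
      have : κ^2 * ((1-p)^2 * p) ≤ κ^2 * 1 := mul_le_mul_of_nonneg_left ha2 (sq_nonneg κ)
      rw [hK2_def]
      nlinarith [this]
    have hODEp := hODE p ⟨hap, hpq⟩
    have hup : 0 ≤ ceff - r * v p := sub_nonneg.2 (huq p ⟨hap, hpq⟩)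
    have hv'p : 0 ≤ v' p := hv' p ⟨hap, hpq⟩
    have hEpos : 0 < Real.exp (C * p) := Real.exp_pos _
    have hv''p : K1 * v'' p = r * v p - ceff - K2 * v' p := by
      rw [hK1_def, hK2_def]; linarith [hODEp]
    have hCkK1 : C * k * K1 = (1 + r*k + κ^2) * K1 := by rw [hCk]
    have hc1 : 1 ≤ C * K1 := by
      nlinarith [hCkK1, hk, hK1pos, hK1, mul_pos hr hk]
    have hc2 : r * K1 + K2 ≤ C * K1 := by
      nlinarith [hCkK1, hk, hK1pos, hK1, hK2, hK2pos,
        mul_le_mul_of_nonneg_right hK1 hK2pos,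
        mul_le_mul_of_nonneg_left hK2 hK1pos.le]
    have hinner : 0 ≤ (-(r * v' p) + v'' p) + M p * C := by
      have hmul : 0 ≤ K1 * ((-(r * v' p) + v'' p) + M p * C) := by
        have a1 : 0 ≤ (C * K1 - 1) * (ceff - r * v p) :=
          mul_nonneg (by linarith) hup
        have a2 : 0 ≤ (C * K1 - r * K1 - K2) * v' p :=
          mul_nonneg (by linarith) hv'p
        have hMp : M p = (ceff - r * v p) + v' p := rfl
        rw [hMp]
        nlinarith [a1, a2, hv''p]
      by_contra hcon
      push_neg at hcon
      nlinarith [mul_neg_of_pos_of_neg hK1pos hcon]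
    have heq : (-(r * v' p) + v'' p) * Real.exp (C * p) + M p * (Real.exp (C * p) * C)
        = ((-(r * v' p) + v'' p) + M p * C) * Real.exp (C * p) := by ring
    rw [heq]
    exact mul_nonneg hinner hEpos.le
  have hgc : ContinuousOn g (Set.Icc a q) :=
    fun p hp => (hgd p hp).continuousAt.continuousWithinAt
  have hgm : MonotoneOn g (Set.Icc a q) := by
    apply monotoneOn_of_deriv_nonneg (convex_Icc a q) hgc
    · rw [interior_Icc]
      exact fun p hp => ((hgd p (Set.Ioo_subset_Icc_self hp)).differentiableAt).differentiableWithinAt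
    · rw [interior_Icc]
      intro p hp
      rw [(hgd p (Set.Ioo_subset_Icc_self hp)).deriv]
      exact key p (Set.Ioo_subset_Icc_self hp)
  have h1 := hgm (Set.left_mem_Icc.2 haq.le) (Set.right_mem_Icc.2 haq.le) haq.le
  have hMq : M q = 0 := by
    have : M q = (ceff - r * v q) + v' q := rfl
    rw [this, hv'q]
    linarith
  have hgq : g q = 0 := by
    have : g q = M q * Real.exp (C * q) := rfl
    rw [this, hMq, zero_mul]
  have hga : 0 < g a := by
    have hga' : g a = M a * Real.exp (C * a) := rfl
    have hMa : 0 < M a := by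
      have : M a = (ceff - r * v a) + v' a := rfl
      rw [this]
      have := huq a (Set.left_mem_Icc.2 haq.le)
      linarith
    rw [hga']
    exact mul_pos hMa (Real.exp_pos _)
  linarith


theorem stmt8 (r c l L b1 b2 vb1 : ℝ) (v v' v'' : ℝ → ℝ)
    (hr : 0 < r) (hc : 0 < c) (hl : 0 < l) (hlL : l < L)
    (hcost : (L - l)^2 ≤ c)
    (hb1 : 0 < b1) (hb12 : b1 < b2) (hb2 : b2 < 1)
    (hcont : ContinuousOn v (Set.Ioc 0 1))
    (hd1 : ∀ p ∈ Set.Ioo b1 1, HasDerivAt v (v' p) p)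
    (hC1 : ContinuousOn v' (Set.Ioo b1 1))
    (hd2 : ∀ p ∈ Set.Ioo b1 b2 ∪ Set.Ioo b2 1, HasDerivAt v' (v'' p) p)
    (hODE1 : ∀ p ∈ Set.Ioo b1 b2,
      L^2*p^2*(1-p)^2/2 * v'' p + L^2*(1-p)^2*p * v' p - r * v p + c - (L-l)^2 = 0)
    (hODE2 : ∀ p ∈ Set.Ioo b2 1,
      l^2*p^2*(1-p)^2/2 * v'' p + l^2*(1-p)^2*p * v' p - r * v p + c = 0)
    (hvb1 : v b1 = 0) (hv1 : v 1 = c/r)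
    (hlim : Filter.Tendsto v' (nhdsWithin b1 (Set.Ioi b1)) (nhds vb1))
    (hvb1pos : 0 < vb1) (hv'b2 : 0 < v' b2) :
    ∀ p ∈ Set.Ioo b1 1, 0 < v' p := by
  by_contra hcon
  push_neg at hcon
  obtain ⟨p0, hp0, hp0f⟩ := hcon
  have hL : 0 < L := lt_trans hl hlL
  have hb11 : b1 < 1 := lt_trans hb12 hb2
  have hC1' : ∀ x ∈ Set.Ioo b1 1, ContinuousAt v' x := fun x hx =>
    hC1.continuousAt (isOpen_Ioo.mem_nhds hx)
  -- positivity of v' near b1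
  have hev : ∀ᶠ p in nhdsWithin b1 (Set.Ioi b1), 0 < v' p :=
    hlim.eventually (eventually_gt_nhds hvb1pos)
  obtain ⟨u, hu1, husub⟩ := mem_nhdsGT_iff_exists_Ioo_subset.1 hev
  -- first zero q of v'
  obtain ⟨q, hq, hq0, hqpos⟩ := first_zero hb11 hC1' p0 hp0 hp0f u hu1 (fun p hp => husub hp)
  have hqb2 : q ≠ b2 := by
    intro h
    rw [h] at hq0
    linarith
  have hq01 : 0 < q := lt_trans hb1 hq.1
  have hqmem : q ∈ Set.Ioo b1 b2 ∪ Set.Ioo b2 1 := by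
    rcases hqb2.lt_or_gt with h | h
    · exact Or.inl ⟨hq.1, h⟩
    · exact Or.inr ⟨h, hq.2⟩
  have hdq := hd2 q hqmem
  have hv''q : v'' q ≤ 0 := deriv_nonpos_of_left_ge hdq hq.1
    (fun p hp => by rw [hq0]; exact (hqpos p hp).le)
  rcases lt_or_eq_of_le hv''q with hneg | heq
  · -- case v''(q) < 0
    obtain ⟨w, hw, hwneg⟩ := neg_right_of_deriv_neg hdq hq0 hneg
    by_cases hT : ∃ p ∈ Set.Ioo q 1, 0 ≤ v' p
    · obtain ⟨p1, hp1, hp1f⟩ := hT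
      obtain ⟨s, hs, hs0', hsneg'⟩ := first_zero hq.2
        (fun x hx => (hC1' x ⟨lt_trans hq.1 hx.1, hx.2⟩).neg)
        p1 hp1 (neg_nonpos.2 hp1f) w hw (fun p hp => neg_pos.2 (hwneg p hp))
      have hs0 : v' s = 0 := by linarith [hs0', Pi.neg_apply v' s]
      have hsneg : ∀ p ∈ Set.Ioo q s, v' p < 0 := fun p hp => by
        have := hsneg' p hp; linarith [Pi.neg_apply v' p]
      have hsb2 : s ≠ b2 := by
        intro h
        rw [h] at hs0
        linarith
      have hb2out : b2 ∉ Set.Ioo q s := fun h => by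
        have := hsneg b2 h; linarith
      have hds : HasDerivAt v' (v'' s) s := by
        apply hd2 s
        rcases hsb2.lt_or_gt with h | h
        · exact Or.inl ⟨lt_trans hq.1 hs.1, h⟩
        · exact Or.inr ⟨h, hs.2⟩
      have hcv : ContinuousOn v (Set.Icc q s) := hcont.mono
        (fun x hx => ⟨lt_of_lt_of_le hq01 hx.1, le_trans hx.2 hs.2.le⟩)
      have hd1' : ∀ p ∈ Set.Icc q s, HasDerivAt v (v' p) p := fun p hp =>
        hd1 p ⟨lt_of_lt_of_le hq.1 hp.1, lt_of_le_of_lt hp.2 hs.2⟩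
      rcases hqb2.lt_or_gt with hqlt | hqgt
      · -- both in (b1, b2)
        have hsb2' : s < b2 := by
          rcases lt_trichotomy s b2 with h | h | h
          · exact h
          · exact absurd h hsb2
          · exact absurd ⟨hqlt, h⟩ hb2out
        exact caseNeg_aux L r (c - (L-l)^2) q s v v' v'' hL hr hq01 hs.1 hs.2 hd1' hds
          (by linarith [hODE1 q ⟨hq.1, hqlt⟩])
          (by linarith [hODE1 s ⟨lt_trans hq.1 hs.1, hsb2'⟩])
          hcv hq0 hs0 hneg hsneg
      · -- both in (b2, 1)
        exact caseNeg_aux l r c q s v v' v'' hl hr hq01 hs.1 hs.2 hd1' hds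
          (hODE2 q ⟨hqgt, hq.2⟩)
          (hODE2 s ⟨lt_trans hqgt hs.1, hs.2⟩)
          hcv hq0 hs0 hneg hsneg
    · -- v' < 0 on (q, 1)
      push_neg at hT
      have hb2q : b2 < q := by
        rcases hqb2.lt_or_gt with h | h
        · exact absurd hv'b2 (not_lt.2 (hT b2 ⟨h, hb2⟩).le)
        · exact h
      have hODEq := hODE2 q ⟨hb2q, hq.2⟩
      rw [hq0] at hODEq
      have h1 : 0 < l^2*q^2*(1-q)^2/2 := by
        have h1q : 0 < 1 - q := by linarith [hq.2]
        positivity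
      have e1 : l^2*q^2*(1-q)^2/2 * v'' q < 0 := mul_neg_of_pos_of_neg h1 hneg
      have hanti : StrictAntiOn v (Set.Icc q 1) := by
        apply strictAntiOn_of_deriv_neg (convex_Icc q 1)
          (hcont.mono (fun x hx => ⟨lt_of_lt_of_le hq01 hx.1, hx.2⟩))
        rw [interior_Icc]
        intro p hp
        rw [(hd1 p ⟨lt_trans hq.1 hp.1, hp.2⟩).deriv]
        exact hT p hp
      have hv1q : v 1 < v q := hanti (Set.left_mem_Icc.2 hq.2.le)
        (Set.right_mem_Icc.2 hq.2.le) hq.2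
      rw [hv1] at hv1q
      have hcq : c < r * v q := by
        rw [div_lt_iff₀ hr] at hv1q
        linarith
      linarith [e1, hODEq, hcq]
  · -- case v''(q) = 0 : Gronwall argument
    rcases hqb2.lt_or_gt with hqlt | hqgt
    · -- regime 1
      set a : ℝ := (b1 + q)/2 with ha_def
      have hab1 : b1 < a := by rw [ha_def]; linarith [hq.1]
      have haq : a < q := by rw [ha_def]; linarith [hq.1]
      have ha0 : 0 < a := lt_trans hb1 hab1
      have hIcc : Set.Icc a q ⊆ Set.Ioo b1 b2 := fun p hp =>
        ⟨lt_of_lt_of_le hab1 hp.1, lt_of_le_of_lt hp.2 hqlt⟩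
      have hIcc1 : Set.Icc a q ⊆ Set.Ioo b1 1 := fun p hp =>
        ⟨(hIcc hp).1, lt_trans (hIcc hp).2 hb2⟩
      have hv'nonneg : ∀ p ∈ Set.Icc a q, 0 ≤ v' p := by
        intro p hp
        rcases eq_or_lt_of_le hp.2 with h | h
        · rw [h, hq0]
        · exact (hqpos p ⟨lt_of_lt_of_le hab1 hp.1, h⟩).le
      have hd1' : ∀ p ∈ Set.Icc a q, HasDerivAt v (v' p) p := fun p hp => hd1 p (hIcc1 hp)
      have hmono : MonotoneOn v (Set.Icc a q) := by
        apply monotoneOn_of_deriv_nonneg (convex_Icc a q)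
          (hcont.mono (fun x hx => ⟨lt_of_lt_of_le ha0 hx.1, le_trans hx.2 (le_of_lt (lt_trans hqlt hb2))⟩))
        · rw [interior_Icc]
          exact fun p hp => ((hd1' p (Set.Ioo_subset_Icc_self hp)).differentiableAt).differentiableWithinAt
        · rw [interior_Icc]
          intro p hp
          rw [(hd1' p (Set.Ioo_subset_Icc_self hp)).deriv]
          exact hv'nonneg p (Set.Ioo_subset_Icc_self hp)
      have hODEq := hODE1 q ⟨hq.1, hqlt⟩
      rw [hq0, heq] at hODEq
      have hvq : r * v q = c - (L-l)^2 := by linarith [hODEq]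
      exact gronwall_aux L r (c - (L-l)^2) a q v v' v'' hL hr ha0 haq (lt_trans hqlt hb2)
        hd1' (fun p hp => hd2 p (Or.inl (hIcc hp)))
        (fun p hp => by linarith [hODE1 p (hIcc hp)])
        hv'nonneg (hqpos a ⟨hab1, haq⟩)
        (fun p hp => by
          have h1 := hmono hp (Set.right_mem_Icc.2 haq.le) hp.2
          nlinarith [mul_le_mul_of_nonneg_left h1 hr.le])
        hvq hq0
    · -- regime 2
      set a : ℝ := (b2 + q)/2 with ha_def
      have hab2 : b2 < a := by rw [ha_def]; linarith
      have haq : a < q := by rw [ha_def]; linarith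
      have ha0 : 0 < a := by linarith [lt_trans hb1 hb12]
      have hIcc : Set.Icc a q ⊆ Set.Ioo b2 1 := fun p hp =>
        ⟨lt_of_lt_of_le hab2 hp.1, lt_of_le_of_lt hp.2 hq.2⟩
      have hIcc1 : Set.Icc a q ⊆ Set.Ioo b1 1 := fun p hp =>
        ⟨lt_trans hb12 (hIcc hp).1, (hIcc hp).2⟩
      have hv'nonneg : ∀ p ∈ Set.Icc a q, 0 ≤ v' p := by
        intro p hp
        rcases eq_or_lt_of_le hp.2 with h | h
        · rw [h, hq0]
        · exact (hqpos p ⟨(hIcc1 hp).1, h⟩).le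
      have hd1' : ∀ p ∈ Set.Icc a q, HasDerivAt v (v' p) p := fun p hp => hd1 p (hIcc1 hp)
      have hmono : MonotoneOn v (Set.Icc a q) := by
        apply monotoneOn_of_deriv_nonneg (convex_Icc a q)
          (hcont.mono (fun x hx => ⟨lt_of_lt_of_le ha0 hx.1, le_trans hx.2 hq.2.le⟩))
        · rw [interior_Icc]
          exact fun p hp => ((hd1' p (Set.Ioo_subset_Icc_self hp)).differentiableAt).differentiableWithinAt
        · rw [interior_Icc]
          intro p hp
          rw [(hd1' p (Set.Ioo_subset_Icc_self hp)).deriv]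
          exact hv'nonneg p (Set.Ioo_subset_Icc_self hp)
      have hODEq := hODE2 q ⟨hqgt, hq.2⟩
      rw [hq0, heq] at hODEq
      have hvq : r * v q = c := by linarith [hODEq]
      exact gronwall_aux l r c a q v v' v'' hl hr ha0 haq hq.2
        hd1' (fun p hp => hd2 p (Or.inr (hIcc hp)))
        (fun p hp => hODE2 p (hIcc hp))
        hv'nonneg (hqpos a ⟨(hIcc1 (Set.left_mem_Icc.2 haq.le)).1, haq⟩)
        (fun p hp => by
          have h1 := hmono hp (Set.right_mem_Icc.2 haq.le) hp.2
          nlinarith [mul_le_mul_of_nonneg_left h1 hr.le])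
        hvq hq0
end

section
/- Let v satisfy (λ̄²p²(1−p)²/2)v'' + λ̄²(1−p)²p v' − rv + c − (λ̄−λ̲)² = 0 on an interval I ⊆ (0,1), let f(p) = p(1−p)v'(p), and suppose v'(p₂) > 0 and f'(p₂) = 0 at some p₂ ∈ I where v is three times differentiable with the ODE differentiable. Then f''(p₂) = 2r·v'(p₂)/(p₂(1−p₂)λ̄²) > 0; in particular every critical point of f in I with v' > 0 is a strict local minimum. -/
open Filter Topology

/-
Multiplying the ODE by p(1-p)L²/2 and using f' = (1-2p)v' + p(1-p)v'' turns it into the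
first-order identity (L²/2) p(1-p) (f' + v') = r v - c + (L-l)², which holds near p₂ and involves
no division. Differentiating it at p₂ and using f'(p₂) = 0, i.e. (1-2p₂)v' + p₂(1-p₂)v'' = 0 there,
leaves (L²/2) p₂(1-p₂) f''(p₂) = r v'(p₂).
-/

lemma hasDerivAt_self_mul_one_sub_mul {g : ℝ → ℝ} {g' x : ℝ} (hg : HasDerivAt g g' x) :
    HasDerivAt (fun y => y * (1 - y) * g y) ((1 - 2 * x) * g x + x * (1 - x) * g') x :=
  ((hasDerivAt_id' x).fun_mul ((hasDerivAt_id' x).const_sub 1)).fun_mul hg |>.congr_deriv (by ring)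

lemma HasDerivAt.deriv_mul_eq_of_eventuallyEq {a F G : ℝ → ℝ} {a' F' G' x : ℝ}
    (ha : HasDerivAt a a' x) (hF : HasDerivAt F F' x) (hG : HasDerivAt G G' x)
    (h : (fun y => a y * F y) =ᶠ[𝓝 x] G) : a' * F x + a x * F' = G' :=
  ((ha.fun_mul hF).congr_of_eventuallyEq h.symm).unique hG

lemma mul_deriv_add_eq_of_ode {r c l L q w₀ w₁ w₂ φ : ℝ}
    (hODE : L^2*q^2*(1-q)^2/2 * w₂ + L^2*(1-q)^2*q * w₁ - r * w₀ + c - (L-l)^2 = 0)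
    (hφ : φ = (1 - 2 * q) * w₁ + q * (1 - q) * w₂) :
    q * (1 - q) * (L^2 / 2) * (φ + w₁) = r * w₀ - c + (L - l)^2 := by
  subst hφ
  linear_combination hODE

theorem stmt10_general (r c l L p2 ε f'' : ℝ) (v v' v'' f' : ℝ → ℝ)
    (hr : 0 < r) (hl : 0 < l) (hlL : l < L)
    (hp : p2 ∈ Set.Ioo (0:ℝ) 1) (hε : 0 < ε)
    (hd1 : ∀ q ∈ Metric.ball p2 ε, HasDerivAt v (v' q) q)
    (hd2 : ∀ q ∈ Metric.ball p2 ε, HasDerivAt v' (v'' q) q)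
    (hODE : ∀ q ∈ Metric.ball p2 ε,
      L^2*q^2*(1-q)^2/2 * v'' q + L^2*(1-q)^2*q * v' q - r * v q + c - (L-l)^2 = 0)
    (hdf : ∀ q ∈ Metric.ball p2 ε,
      HasDerivAt (fun x => x*(1-x)*v' x) (f' q) q)
    (hdf2 : HasDerivAt f' f'' p2)
    (hcrit : f' p2 = 0) (hvpos : 0 < v' p2) :
    f'' = 2*r*v' p2/(p2*(1-p2)*L^2) ∧ 0 < f'' := by
  obtain ⟨hp0, hp1⟩ := hp
  have hp2 : p2 ∈ Metric.ball p2 ε := Metric.mem_ball_self hε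
  have hf' : ∀ q ∈ Metric.ball p2 ε, f' q = (1 - 2 * q) * v' q + q * (1 - q) * v'' q :=
    fun q hq => (hdf q hq).unique (hasDerivAt_self_mul_one_sub_mul (hd2 q hq))
  have hfirst : (fun q => q * (1 - q) * (L^2 / 2) * (f' q + v' q)) =ᶠ[𝓝 p2]
      fun q => r * v q - c + (L - l)^2 :=
    eventually_of_mem (Metric.ball_mem_nhds p2 hε) fun q hq =>
      mul_deriv_add_eq_of_ode (hODE q hq) (hf' q hq)
  have hdiff := HasDerivAt.deriv_mul_eq_of_eventuallyEq
    (hasDerivAt_self_mul_one_sub_mul (hasDerivAt_const p2 (L^2 / 2)))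
    (hdf2.fun_add (hd2 p2 hp2)) ((((hd1 p2 hp2).const_mul r).sub_const c).add_const _) hfirst
  have hden : 0 < p2 * (1 - p2) * L^2 := by
    have : 0 < 1 - p2 := by linarith
    have : L ≠ 0 := (hl.trans hlL).ne'
    positivity
  have hmain : f'' = 2*r*v' p2/(p2*(1-p2)*L^2) := by
    rw [eq_div_iff hden.ne']
    linear_combination 2 * hdiff - 2 * L^2 * (1 - p2) * hcrit + L^2 * hf' p2 hp2
  exact ⟨hmain, hmain ▸ by positivity⟩

theorem stmt10 (r c l L p2 ε f'' : ℝ) (v v' v'' v''' f' : ℝ → ℝ)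
    (hr : 0 < r) (hc : 0 < c) (hl : 0 < l) (hlL : l < L)
    (hp : p2 ∈ Set.Ioo (0:ℝ) 1) (hε : 0 < ε)
    (hball : Metric.ball p2 ε ⊆ Set.Ioo (0:ℝ) 1)
    (hd1 : ∀ q ∈ Metric.ball p2 ε, HasDerivAt v (v' q) q)
    (hd2 : ∀ q ∈ Metric.ball p2 ε, HasDerivAt v' (v'' q) q)
    (hd3 : ∀ q ∈ Metric.ball p2 ε, HasDerivAt v'' (v''' q) q)
    (hODE : ∀ q ∈ Metric.ball p2 ε,
      L^2*q^2*(1-q)^2/2 * v'' q + L^2*(1-q)^2*q * v' q - r * v q + c - (L-l)^2 = 0)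
    (hdf : ∀ q ∈ Metric.ball p2 ε,
      HasDerivAt (fun x => x*(1-x)*v' x) (f' q) q)
    (hdf2 : HasDerivAt f' f'' p2)
    (hcrit : f' p2 = 0) (hvpos : 0 < v' p2) :
    f'' = 2*r*v' p2/(p2*(1-p2)*L^2) ∧ 0 < f'' :=
  stmt10_general r c l L p2 ε f'' v v' v'' f' hr hl hlL hp hε hd1 hd2 hODE hdf hdf2 hcrit hvpos
end

section
/- Let r > 0, c > 0, λ̄ > λ̲ > 0, and suppose v solves the two-regime ODE system (λ̄-regime on (b₁*,b₂*), λ̲-regime on (b₂*,1)) with v ∈ C¹(b₁*,1), the smooth-pasting conditions v'(b₂*) = (λ̄−λ̲)/(b₂*(1−b₂*)λ̲) and v(b₂*) = c/r − (λ̄−λ̲)/(α₁(λ̲)λ̲), where α₁(λ̲) = 1/2 + (1/2)√(8r/λ̲² + 1). Define f(p) = p(1−p)v'(p). Then the left derivative satisfies f'(b₂*−) = (1/(b₂*(1−b₂*)))·(−2r(λ̄−λ̲)/(α₁(λ̲)λ̄²λ̲) + 2(λ̄−λ̲)²/λ̄² − (λ̄−λ̲)/λ̲) and this quantity is strictly negative.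 -/
theorem stmt11 (r c l L b1 b2 : ℝ) (v v' v'' f' : ℝ → ℝ)
    (hr : 0 < r) (hc : 0 < c) (hl : 0 < l) (hlL : l < L)
    (hb1 : 0 < b1) (hb12 : b1 < b2) (hb2 : b2 < 1)
    (hcont : ContinuousOn v (Set.Ioc 0 1))
    (hd1 : ∀ p ∈ Set.Ioo b1 1, HasDerivAt v (v' p) p)
    (hC1 : ContinuousOn v' (Set.Ioo b1 1))
    (hd2 : ∀ p ∈ Set.Ioo b1 b2 ∪ Set.Ioo b2 1, HasDerivAt v' (v'' p) p)
    (hODE1 : ∀ p ∈ Set.Ioo b1 b2,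
      L^2*p^2*(1-p)^2/2 * v'' p + L^2*(1-p)^2*p * v' p - r * v p + c - (L-l)^2 = 0)
    (hODE2 : ∀ p ∈ Set.Ioo b2 1,
      l^2*p^2*(1-p)^2/2 * v'' p + l^2*(1-p)^2*p * v' p - r * v p + c = 0)
    (hvb1 : v b1 = 0) (hv1 : v 1 = c/r)
    (hsp : v' b2 = (L - l)/(b2*(1-b2)*l))
    (hjump : v b2 = c/r - (L - l)/(alpha1 r l * l))
    (hdf : ∀ p ∈ Set.Ioo b1 b2,
      HasDerivAt (fun x => x*(1-x)*v' x) (f' p) p) :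
    Filter.Tendsto f' (nhdsWithin b2 (Set.Iio b2))
      (nhds ((1/(b2*(1-b2))) *
        (-(2*r*(L-l))/(alpha1 r l * L^2 * l) + 2*(L-l)^2/L^2 - (L-l)/l))) ∧
    (1/(b2*(1-b2))) *
      (-(2*r*(L-l))/(alpha1 r l * L^2 * l) + 2*(L-l)^2/L^2 - (L-l)/l) < 0 := by
  have hL : 0 < L := hl.trans hlL
  have ha : 0 < alpha1 r l := by
    have := Real.sqrt_nonneg (8*r/l^2 + 1)
    unfold alpha1; linarith
  have hb2pos : 0 < b2 := hb1.trans hb12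
  have hb2' : 0 < 1 - b2 := by linarith
  have hbb : 0 < b2 * (1 - b2) := mul_pos hb2pos hb2'
  set T : ℝ := (1/(b2*(1-b2))) *
      (-(2*r*(L-l))/(alpha1 r l * L^2 * l) + 2*(L-l)^2/L^2 - (L-l)/l) with hT
  constructor
  · -- limit
    set g : ℝ → ℝ := fun p => -v' p + 2*(r*v p - c + (L-l)^2)/(L^2*p*(1-p)) with hg
    have hmem : b2 ∈ Set.Ioo b1 (1:ℝ) := ⟨hb12, hb2⟩
    -- value of g limit
    have hval : T = -v' b2 + 2*(r*v b2 - c + (L-l)^2)/(L^2*b2*(1-b2)) := by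
      rw [hsp, hjump, hT]
      field_simp
      ring
    -- tendsto of g
    have hnw : nhdsWithin b2 (Set.Iio b2) = nhdsWithin b2 (Set.Ioo b1 b2) :=
      (nhdsWithin_Ioo_eq_nhdsLT hb12).symm
    have htv' : Filter.Tendsto v' (nhdsWithin b2 (Set.Iio b2)) (nhds (v' b2)) := by
      rw [hnw]
      exact ((hC1 b2 hmem).mono (Set.Ioo_subset_Ioo le_rfl hb2.le)).tendsto
    have htv : Filter.Tendsto v (nhdsWithin b2 (Set.Iio b2)) (nhds (v b2)) :=
      ((hd1 b2 hmem).continuousAt.continuousWithinAt).tendsto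
    have htg : Filter.Tendsto g (nhdsWithin b2 (Set.Iio b2)) (nhds T) := by
      rw [hval]
      have hden : Filter.Tendsto (fun p : ℝ => L^2*p*(1-p)) (nhdsWithin b2 (Set.Iio b2))
          (nhds (L^2*b2*(1-b2))) := by
        apply Filter.Tendsto.mono_left _ nhdsWithin_le_nhds
        exact (((continuous_const.mul continuous_id).mul
          (continuous_const.sub continuous_id)).tendsto b2)
      have hdne : L^2*b2*(1-b2) ≠ 0 := by positivity
      exact (htv'.neg).add (((((htv.const_mul r).sub tendsto_const_nhds).add
        tendsto_const_nhds).const_mul 2).div hden hdne)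
    -- f' = g eventually
    refine htg.congr' ?_
    have hmem2 : Set.Ioo b1 b2 ∈ nhdsWithin b2 (Set.Iio b2) := by
      rw [hnw]; exact self_mem_nhdsWithin
    filter_upwards [hmem2] with p hp
    have hp0 : (0:ℝ) < p := hb1.trans hp.1
    have hp1 : p < 1 := hp.2.trans hb2
    have hp1' : (0:ℝ) < 1 - p := by linarith
    have hder : HasDerivAt (fun x => x*(1-x)*v' x)
        ((1-2*p)*v' p + p*(1-p)*v'' p) p := by
      have h1 : HasDerivAt (fun x : ℝ => x*(1-x)) (1-2*p) p := by
        have h0 : HasDerivAt (fun x : ℝ => x - x^2) (1 - 2*p) p := by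
          simpa using (hasDerivAt_id p).fun_sub (hasDerivAt_pow 2 p)
        exact h0.congr_of_eventuallyEq (Filter.Eventually.of_forall fun x => by ring)
      have h2 : HasDerivAt v' (v'' p) p := hd2 p (Or.inl hp)
      exact (h1.mul h2).congr_deriv (by ring)
    have heq : f' p = (1-2*p)*v' p + p*(1-p)*v'' p :=
      (hdf p hp).unique hder
    have hv'' : v'' p = (r*v p - c + (L-l)^2 - L^2*(1-p)^2*p*v' p) * 2/(L^2*p^2*(1-p)^2) := by
      have h := hODE1 p hp
      field_simp
      linear_combination 2 * h
    rw [hg]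
    simp only
    rw [heq, hv'']
    field_simp
    ring
  · -- negativity
    have h1 : -(2*r*(L-l))/(alpha1 r l * L^2 * l) < 0 := by
      apply div_neg_of_neg_of_pos
      · nlinarith
      · positivity
    have h2 : 2*(L-l)^2/L^2 - (L-l)/l ≤ 0 := by
      rw [sub_nonpos, div_le_div_iff₀ (by positivity) hl]
      nlinarith [sq_nonneg (L-l), sq_nonneg l]
    have : -(2*r*(L-l))/(alpha1 r l * L^2 * l) + 2*(L-l)^2/L^2 - (L-l)/l < 0 := by linarith
    exact mul_neg_of_pos_of_neg (by positivity) this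
end

section
/- With the explicit solution v(p, b₁*, b₂*) = k₁((1−p)/p)^{α₁(λ̄)} + k₂((1−p)/p)^{α₂(λ̄)} + (c−(λ̄−λ̲)²)/r on (b₁*, b₂*), where k₁, k₂ are determined by v(b₁*) = 0, v(b₂*+) = c/r − (λ̄−λ̲)/(α₁(λ̲)λ̲), and assuming −α₂(λ̄)·((λ̄−λ̲)²/r − (λ̄−λ̲)/(α₁(λ̲)λ̲)) < (λ̄−λ̲)/λ̲ < c/r: the one-sided limit lim_{b₂*→1⁻} b₂*(1−b₂*)·v_p(b₂*−, b₁*, b₂*) = −α₂(λ̄)·((λ̄−λ̲)²/r − (λ̄−λ̲)/(α₁(λ̲)λ̲)). -/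
noncomputable def alpha2 (r lam : ℝ) : ℝ := 1/2 - Real.sqrt (8*r/lam^2 + 1) / 2

open Filter Topology Set

lemma alpha1_pos (r lam : ℝ) : 0 < alpha1 r lam := by
  unfold alpha1
  positivity

lemma alpha2_neg {r lam : ℝ} (hr : 0 < r) (hlam : lam ≠ 0) : alpha2 r lam < 0 := by
  have : 1 < Real.sqrt (8 * r / lam ^ 2 + 1) := by
    rw [Real.lt_sqrt zero_le_one]
    have : 0 < 8 * r / lam ^ 2 := by positivity
    linarith
  unfold alpha2
  linarith

lemma tendsto_rpow_nhdsGT_zero {t : ℝ} (ht : 0 < t) :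
    Tendsto (fun x : ℝ => x ^ t) (𝓝[>] 0) (𝓝 0) := by
  have h := (Real.continuousAt_rpow_const 0 t (Or.inr ht.le)).tendsto
  rw [Real.zero_rpow ht.ne'] at h
  exact h.mono_left nhdsWithin_le_nhds

lemma tendsto_one_sub_div_self_nhdsLT_one :
    Tendsto (fun b : ℝ => (1 - b) / b) (𝓝[<] 1) (𝓝[>] 0) := by
  refine tendsto_nhdsWithin_iff.2 ⟨?_, ?_⟩
  · have h : ContinuousAt (fun b : ℝ => (1 - b) / b) 1 :=
      (continuousAt_const.sub continuousAt_id).div continuousAt_id one_ne_zero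
    simpa using h.tendsto.mono_left nhdsWithin_le_nhds
  · filter_upwards [Ioo_mem_nhdsLT zero_lt_one] with b hb
    exact div_pos (sub_pos.2 hb.2) hb.1

lemma rpow_eq_rpow_sub_mul_rpow {x : ℝ} (hx : 0 < x) (a b : ℝ) :
    x ^ a = x ^ (a - b) * x ^ b := by
  rw [← Real.rpow_add hx, sub_add_cancel]

section BoundaryCoefficients

variable {A B M N P : ℝ}

/-- `k₁` in the variable `x = (1 - b₂) / b₂`, where `P = q ^ (A - B)`,
`N = ((c - (λ̄ - λ̲)²) / r) q ^ (-B)` and `q = (1 - b₁) / b₁`. -/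
noncomputable def coeffOne (A B M N P x : ℝ) : ℝ := (M + N * x ^ B) / (x ^ A - P * x ^ B)

lemma coeffOne_mul_rpow {x : ℝ} (hx : 0 < x) :
    coeffOne A B M N P x * x ^ A = (M * x ^ (A - B) + N * x ^ A) / (x ^ (A - B) - P) := by
  have hxB : x ^ B ≠ 0 := (Real.rpow_pos_of_pos hx B).ne'
  rw [coeffOne, rpow_eq_rpow_sub_mul_rpow hx A B]
  generalize x ^ (A - B) = y
  rcases eq_or_ne y P with rfl | hyP
  · simp
  · have : y - P ≠ 0 := sub_ne_zero.2 hyP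
    field_simp

lemma coeffTwo_mul_rpow {x : ℝ} (hx : 0 < x) (hP : x ^ (A - B) ≠ P) :
    (-N - coeffOne A B M N P x * P) * x ^ B = -(N * x ^ A + P * M) / (x ^ (A - B) - P) := by
  have hxB : x ^ B ≠ 0 := (Real.rpow_pos_of_pos hx B).ne'
  rw [coeffOne, rpow_eq_rpow_sub_mul_rpow hx A B]
  generalize x ^ (A - B) = y at hP ⊢
  have : y - P ≠ 0 := sub_ne_zero.2 hP
  field_simp
  ring

lemma tendsto_coeffOne_mul_rpow (hA : 0 < A) (hB : B < 0) (hP : P ≠ 0) :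
    Tendsto (fun x => coeffOne A B M N P x * x ^ A) (𝓝[>] 0) (𝓝 0) := by
  have hy := tendsto_rpow_nhdsGT_zero (sub_pos.2 (hB.trans hA))
  have hz := tendsto_rpow_nhdsGT_zero hA
  have h := ((hy.const_mul M).add (hz.const_mul N)).div (hy.sub_const P) (by simpa using hP)
  simp only [mul_zero, add_zero, zero_div] at h
  refine h.congr' ?_
  filter_upwards [self_mem_nhdsWithin] with x hx
  exact (coeffOne_mul_rpow hx).symm

lemma tendsto_coeffTwo_mul_rpow (hA : 0 < A) (hB : B < 0) (hP : P ≠ 0) :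
    Tendsto (fun x => (-N - coeffOne A B M N P x * P) * x ^ B) (𝓝[>] 0) (𝓝 M) := by
  have hy := tendsto_rpow_nhdsGT_zero (sub_pos.2 (hB.trans hA))
  have hz := tendsto_rpow_nhdsGT_zero hA
  have h := ((hz.const_mul N).add_const (P * M)).neg.div (hy.sub_const P) (by simpa using hP)
  rw [mul_zero, zero_add, zero_sub, neg_div_neg_eq, mul_div_cancel_left₀ M hP] at h
  refine h.congr' ?_
  filter_upwards [self_mem_nhdsWithin, hy.eventually_ne hP.symm] with x hx hyP
  exact (coeffTwo_mul_rpow hx hyP).symm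

/-- Since `dx/dp = -1 / p²`, `p (1 - p) v_p` equals `-(A k₁ x ^ A + B k₂ x ^ B)`,
and `k₂ = -N - k₁ P`. -/
lemma tendsto_scaledDerivative_nhdsGT_zero (hA : 0 < A) (hB : B < 0) (hP : P ≠ 0) :
    Tendsto (fun x => -(A * coeffOne A B M N P x * x ^ A
      + B * (-N - coeffOne A B M N P x * P) * x ^ B)) (𝓝[>] 0) (𝓝 (-B * M)) := by
  have h := (((tendsto_coeffOne_mul_rpow (M := M) (N := N) hA hB hP).const_mul A).add
    ((tendsto_coeffTwo_mul_rpow (M := M) (N := N) hA hB hP).const_mul B)).neg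
  rw [mul_zero, zero_add, ← neg_mul] at h
  simpa only [mul_assoc] using h

end BoundaryCoefficients

theorem stmt14_general (r c l L b1 : ℝ)
    (hr : 0 < r) (hl : 0 < l) (hlL : l < L)
    (hb1 : b1 ∈ Set.Ioo (0:ℝ) 1)
    (k1 k2 G : ℝ → ℝ)
    (hk1 : ∀ b2 ∈ Set.Ioo b1 1,
      k1 b2 = ((L-l)^2/r - (L-l)/(alpha1 r l * l)
          + ((c-(L-l)^2)/r) * ((1-b1)/b1) ^ (-(alpha2 r L)) * ((1-b2)/b2) ^ (alpha2 r L))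
        / (((1-b2)/b2) ^ (alpha1 r L)
          - ((1-b1)/b1) ^ (alpha1 r L - alpha2 r L) * ((1-b2)/b2) ^ (alpha2 r L)))
    (hk2 : ∀ b2 ∈ Set.Ioo b1 1,
      k2 b2 = ((L-l)^2-c)/r * ((1-b1)/b1) ^ (-(alpha2 r L))
        - k1 b2 * ((1-b1)/b1) ^ (alpha1 r L - alpha2 r L))
    (hG : ∀ b2 ∈ Set.Ioo b1 1,
      G b2 = -(alpha1 r L * k1 b2 * ((1-b2)/b2) ^ (alpha1 r L)
        + alpha2 r L * k2 b2 * ((1-b2)/b2) ^ (alpha2 r L))) :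
    Filter.Tendsto G (nhdsWithin 1 (Set.Ioo b1 1))
      (nhds (-alpha2 r L * ((L-l)^2/r - (L-l)/(alpha1 r l * l)))) := by
  set A := alpha1 r L
  set B := alpha2 r L
  set M := (L-l)^2/r - (L-l)/(alpha1 r l * l)
  set N := (c-(L-l)^2)/r * ((1-b1)/b1) ^ (-B)
  set P := ((1-b1)/b1) ^ (A - B)
  have hA : 0 < A := alpha1_pos r L
  have hB : B < 0 := alpha2_neg hr (hl.trans hlL).ne'
  have hP : P ≠ 0 := (Real.rpow_pos_of_pos (div_pos (sub_pos.2 hb1.2) hb1.1) _).ne'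
  have hx : Tendsto (fun b2 : ℝ => (1-b2)/b2) (𝓝[Ioo b1 1] 1) (𝓝[>] 0) :=
    tendsto_one_sub_div_self_nhdsLT_one.mono_left (nhdsWithin_mono _ Ioo_subset_Iio_self)
  refine ((tendsto_scaledDerivative_nhdsGT_zero (M := M) (N := N) hA hB hP).comp hx).congr' ?_
  filter_upwards [self_mem_nhdsWithin] with b2 hb2
  rw [hG b2 hb2, hk2 b2 hb2, hk1 b2 hb2]
  simp only [Function.comp, coeffOne, N, P]
  ring

theorem stmt14 (r c l L b1 : ℝ)
    (hr : 0 < r) (hc : 0 < c) (hl : 0 < l) (hlL : l < L)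
    (hb1 : b1 ∈ Set.Ioo (0:ℝ) 1)
    (hcond1 : -alpha2 r L * ((L-l)^2/r - (L-l)/(alpha1 r l * l)) < (L-l)/l)
    (hcond2 : (L-l)/l < c/r)
    (k1 k2 G : ℝ → ℝ)
    (hk1 : ∀ b2 ∈ Set.Ioo b1 1,
      k1 b2 = ((L-l)^2/r - (L-l)/(alpha1 r l * l)
          + ((c-(L-l)^2)/r) * ((1-b1)/b1) ^ (-(alpha2 r L)) * ((1-b2)/b2) ^ (alpha2 r L))
        / (((1-b2)/b2) ^ (alpha1 r L)
          - ((1-b1)/b1) ^ (alpha1 r L - alpha2 r L) * ((1-b2)/b2) ^ (alpha2 r L)))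
    (hk2 : ∀ b2 ∈ Set.Ioo b1 1,
      k2 b2 = ((L-l)^2-c)/r * ((1-b1)/b1) ^ (-(alpha2 r L))
        - k1 b2 * ((1-b1)/b1) ^ (alpha1 r L - alpha2 r L))
    (hG : ∀ b2 ∈ Set.Ioo b1 1,
      G b2 = -(alpha1 r L * k1 b2 * ((1-b2)/b2) ^ (alpha1 r L)
        + alpha2 r L * k2 b2 * ((1-b2)/b2) ^ (alpha2 r L))) :
    Filter.Tendsto G (nhdsWithin 1 (Set.Ioo b1 1))
      (nhds (-alpha2 r L * ((L-l)^2/r - (L-l)/(alpha1 r l * l)))) :=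
  stmt14_general r c l L b1 hr hl hlL hb1 k1 k2 G hk1 hk2 hG
end

section
/- Let r, c > 0, λ̄ > λ̲ > 0 with α₁(λ̲)λ̲ ≥ λ̲ and c ≤ (1 − α₁(λ̲))λ̄ + α₁(λ̲)λ̲. Define f(b) = (1 − α₁(λ̄))c + b·(α₁(λ̄)λ̄ − α₁(λ̲)(λ̄ − λ̲) − c) for b ∈ (0,1), where α₁(λ) = 1/2 + (1/2)√(8r/λ² + 1). Then f is nondecreasing in b and f(c/λ̄) ≥ 0. -/
theorem one_le_alpha1 {r : ℝ} (hr : 0 ≤ r) (lam : ℝ) : 1 ≤ alpha1 r lam := by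
  have hsqrt : 1 ≤ Real.sqrt (8*r/lam^2 + 1) :=
    Real.one_le_sqrt.mpr (le_add_of_nonneg_left (by positivity))
  unfold alpha1
  linarith

theorem stmt16_general (r c l L : ℝ)
    (hr : 0 < r) (hc : 0 < c) (hl : 0 < l) (hlL : l < L)
    (h2 : c ≤ (1 - alpha1 r l) * L + alpha1 r l * l) :
    (∀ b ∈ Set.Ioo (0:ℝ) 1, ∀ b' ∈ Set.Ioo (0:ℝ) 1, b ≤ b' →
      (1 - alpha1 r L)*c + b*(alpha1 r L * L - alpha1 r l * (L - l) - c)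
        ≤ (1 - alpha1 r L)*c + b'*(alpha1 r L * L - alpha1 r l * (L - l) - c)) ∧
    0 ≤ (1 - alpha1 r L)*c + (c/L)*(alpha1 r L * L - alpha1 r l * (L - l) - c) := by
  have hL : 0 < L := hl.trans hlL
  have hgap : 0 ≤ L - alpha1 r l * (L - l) - c := by linarith
  have hslope : 0 ≤ alpha1 r L * L - alpha1 r l * (L - l) - c := by
    linarith [le_mul_of_one_le_left hL.le (one_le_alpha1 hr.le L)]
  refine ⟨fun b _ b' _ hbb => by gcongr, ?_⟩
  have hvalue : (1 - alpha1 r L)*c + (c/L)*(alpha1 r L * L - alpha1 r l * (L - l) - c)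
      = (c/L) * (L - alpha1 r l * (L - l) - c) := by
    field_simp
    ring
  rw [hvalue]
  exact mul_nonneg (div_nonneg hc.le hL.le) hgap

theorem stmt16 (r c l L : ℝ)
    (hr : 0 < r) (hc : 0 < c) (hl : 0 < l) (hlL : l < L)
    (h1 : l ≤ alpha1 r l * l)
    (h2 : c ≤ (1 - alpha1 r l) * L + alpha1 r l * l) :
    (∀ b ∈ Set.Ioo (0:ℝ) 1, ∀ b' ∈ Set.Ioo (0:ℝ) 1, b ≤ b' →
      (1 - alpha1 r L)*c + b*(alpha1 r L * L - alpha1 r l * (L - l) - c)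
        ≤ (1 - alpha1 r L)*c + b'*(alpha1 r L * L - alpha1 r l * (L - l) - c)) ∧
    0 ≤ (1 - alpha1 r L)*c + (c/L)*(alpha1 r L * L - alpha1 r l * (L - l) - c) :=
  stmt16_general r c l L hr hc hl hlL h2
end

section
/- Fix r, c > 0, λ̄ > λ̲ > 0 and set h = λ̄ − λ̲. Consider the conditions: (i) −α₂(λ̄)(h²/r − h/(α₁(λ̲)λ̲)) < h/λ̲ and h/λ̲ < c/r, and (ii) h² ≤ c ≤ (1−α₁(λ̲))·(λ̲+h) + α₁(λ̲)λ̲ = λ̲ + (1−α₁(λ̲))h. Claim: for fixed c, r, λ̲ with λ̲ > 0, 0 < c < λ̲ and c/r > 0, there exists h̄ > 0 such that conditions (i) and (ii) hold for all h ∈ (0, h̄]. -/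
lemma one_lt_sqrt_aux (r lam : ℝ) (hr : 0 < r) (hlam : 0 < lam) :
    1 < Real.sqrt (8*r/lam^2 + 1) := by
  have h1 : 0 < 8*r/lam^2 := by positivity
  have := (Real.lt_sqrt (by positivity)).mpr (show (1:ℝ)^2 < 8*r/lam^2 + 1 by nlinarith)
  simpa using this

theorem stmt18 (r c l : ℝ) (hr : 0 < r) (hl : 0 < l) (hc : 0 < c) (hcl : c < l) :
    ∃ hbar > 0, ∀ h ∈ Set.Ioc (0:ℝ) hbar,
      (-(alpha2 r (l+h)) * (h^2/r - h/(alpha1 r l * l)) < h/l ∧ h/l < c/r) ∧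
      (h^2 ≤ c ∧ c ≤ l + (1 - alpha1 r l) * h) := by
  set a := alpha1 r l with ha
  have hsa : 1 < Real.sqrt (8*r/l^2 + 1) := one_lt_sqrt_aux r l hr hl
  have ha1 : 1 < a := by unfold a alpha1; linarith
  have ha0 : 0 < a := by linarith
  refine ⟨min (min (r/(2*a*l)) (l*c/(2*r))) (min (Real.sqrt c) ((l-c)/(a-1))),
    lt_min (lt_min (by positivity) (by positivity))
      (lt_min (Real.sqrt_pos.mpr hc) (div_pos (by linarith) (by linarith))), ?_⟩
  rintro h ⟨hh0, hhb⟩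
  have hb1 : h ≤ r/(2*a*l) := le_trans hhb (le_trans (min_le_left _ _) (min_le_left _ _))
  have hb2 : h ≤ l*c/(2*r) := le_trans hhb (le_trans (min_le_left _ _) (min_le_right _ _))
  have hb3 : h ≤ Real.sqrt c := le_trans hhb (le_trans (min_le_right _ _) (min_le_left _ _))
  have hb4 : h ≤ (l-c)/(a-1) := le_trans hhb (le_trans (min_le_right _ _) (min_le_right _ _))
  rw [le_div_iff₀ (by positivity)] at hb1 hb2
  rw [le_div_iff₀ (by linarith : (0:ℝ) < a-1)] at hb4
  have hlh : 0 < l + h := by linarith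
  have hneg2 : 0 < -(alpha2 r (l+h)) := by
    have := one_lt_sqrt_aux r (l+h) hr hlh
    unfold alpha2; linarith
  refine ⟨⟨?_, ?_⟩, ?_, ?_⟩
  · have hneg : h^2/r - h/(a*l) < 0 := by
      rw [sub_neg, div_lt_div_iff₀ hr (by positivity)]
      nlinarith [mul_pos ha0 hl]
    have h1 : -(alpha2 r (l+h)) * (h^2/r - h/(a*l)) < 0 := mul_neg_of_pos_of_neg hneg2 hneg
    have h2 : 0 < h/l := by positivity
    linarith
  · rw [div_lt_div_iff₀ hl hr]
    nlinarith
  · nlinarith [Real.sq_sqrt hc.le, Real.sqrt_nonneg c]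
  · nlinarith
end
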